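/- arXiv:1610.08370 — 3 statements merged into one kernel-verified Lean document; each statement's English description precedes it below -/
import Mathlib

section
/- Let G be a connected threshold graph on vertex set {0,1,…,n} (n≥1) labeled by reverse degree sequence. Then Ehr_{q,1}(F_G) = t_G(1,q), where t_G(1,q) = Σ_A (q−1)^{|A|−n} is the Tutte polynomial evaluation given by summing over all subsets A of the edge set of G for which the spanning subgraph ({0,…,n},A) is connected. -/
open Finset Polynomial

namespace ThresholdFlow

/-- A threshold graph on `{0,…,n}` labeled by reverse degree sequence: whenever `i > j` are
adjacent and `i' ≤ i`, `j' ≤ j`, `i' ≠ j'`, then `i'` and `j'` are adjacent. -/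
def IsThreshold (n : ℕ) (G : SimpleGraph (Fin (n+1))) : Prop :=
  ∀ i j i' j' : Fin (n+1), j < i → G.Adj i j → i' ≤ i → j' ≤ j → i' ≠ j' → G.Adj i' j'

/-- An integer `a`-flow on `G`: nonnegative integers on the edges of `G` (oriented from the
larger endpoint `i` to the smaller endpoint `j`, recorded as `f i j`), with net flow `a i`
at every vertex `i ≠ 0`. -/
def IsFlow (n : ℕ) (G : SimpleGraph (Fin (n+1))) (a : Fin (n+1) → ℕ)
    (f : Fin (n+1) → Fin (n+1) → ℕ) : Prop :=
  (∀ i j, f i j ≠ 0 → j < i ∧ G.Adj i j) ∧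
  (∀ i : Fin (n+1), i ≠ 0 → ∑ j, f i j = a i + ∑ j, f j i)

/-- The number of positive entries of a flow. -/
def posCount (n : ℕ) (f : Fin (n+1) → Fin (n+1) → ℕ) : ℕ :=
  (Finset.univ.filter fun pr : Fin (n+1) × Fin (n+1) => 0 < f pr.1 pr.2).card

/-- `[b]_q = 1 + q + ⋯ + q^(b-1)` as a polynomial in `ℤ[q]`. -/
noncomputable def qnat (b : ℕ) : Polynomial ℤ := ∑ k ∈ Finset.range b, X ^ k

/-- `Ehr_{q,1}(F_G(a))`: the sum over integer `a`-flows with exactly `n` positive entries of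
`∏_{e : f(e) > 0} [f(e)]_q`. -/
noncomputable def Ehr1 (n : ℕ) (G : SimpleGraph (Fin (n+1))) (a : Fin (n+1) → ℕ) :
    Polynomial ℤ :=
  ∑ᶠ f ∈ {f | IsFlow n G a f ∧ posCount n f = n},
    ∏ i, ∏ j, if 0 < f i j then qnat (f i j) else 1

/-- `Ehr_{q,0}(F_G(a))`: the sum over all integer `a`-flows of
`(q-1)^(s(f)-n) ∏_{e : f(e) > 0} q^(f(e)-1)`. -/
noncomputable def Ehr0 (n : ℕ) (G : SimpleGraph (Fin (n+1))) (a : Fin (n+1) → ℕ) :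
    Polynomial ℤ :=
  ∑ᶠ f ∈ {f | IsFlow n G a f},
    (X - 1) ^ (posCount n f - n) * ∏ i, ∏ j, if 0 < f i j then X ^ (f i j - 1) else 1

/-- `Ehr_{1,1}(F_G(a))`: the sum over integer `a`-flows with exactly `n` positive entries of
the product of the positive entries. -/
noncomputable def Ehr11 (n : ℕ) (G : SimpleGraph (Fin (n+1))) (a : Fin (n+1) → ℕ) : ℕ :=
  ∑ᶠ f ∈ {f | IsFlow n G a f ∧ posCount n f = n},
    ∏ i, ∏ j, if 0 < f i j then f i j else 1

/-- A spanning tree of `G` rooted at `0`, encoded by its parent function `p`: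
`p 0 = 0`, each `i ≠ 0` is adjacent in `G` to its parent `p i`, and iterating the parent
function from any vertex reaches the root `0`. -/
def IsSpanTree (n : ℕ) (G : SimpleGraph (Fin (n+1))) (p : Fin (n+1) → Fin (n+1)) : Prop :=
  p 0 = 0 ∧ (∀ i, i ≠ 0 → G.Adj i (p i)) ∧ ∀ i, ∃ k, p^[k] i = 0

/-- `j` is a descendant of `i` in the rooted tree with parent function `p`
(in particular every vertex is a descendant of itself). -/
def Desc (n : ℕ) (p : Fin (n+1) → Fin (n+1)) (i j : Fin (n+1)) : Prop :=
  ∃ k, p^[k] j = i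

/-- The set of inversions of the rooted tree `p`: pairs `(i,j)` with `i > j`, `i ≠ 0` and
`j` a descendant of `i`. -/
def invSet (n : ℕ) (p : Fin (n+1) → Fin (n+1)) : Set (Fin (n+1) × Fin (n+1)) :=
  {pr | pr.2 < pr.1 ∧ pr.1 ≠ 0 ∧ Desc n p pr.1 pr.2}

/-- The number of inversions of the rooted tree `p`. -/
noncomputable def treeInv (n : ℕ) (p : Fin (n+1) → Fin (n+1)) : ℕ := (invSet n p).ncard

/-- A rooted spanning tree is increasing if it has no inversions. -/
def IsIncr (n : ℕ) (p : Fin (n+1) → Fin (n+1)) : Prop := invSet n p = ∅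

/-- `δ_T(i)`: the number of descendants of `i` (including `i` itself). -/
noncomputable def delta (n : ℕ) (p : Fin (n+1) → Fin (n+1)) (i : Fin (n+1)) : ℕ :=
  Set.ncard {j | Desc n p i j}

/-- `δ_T^a(i) = Σ_j a_j`, summed over the descendants `j` of `i` (including `i` itself). -/
noncomputable def deltaA (n : ℕ) (a : Fin (n+1) → ℕ) (p : Fin (n+1) → Fin (n+1))
    (i : Fin (n+1)) : ℕ :=
  ∑ᶠ j ∈ {j | Desc n p i j}, a j

/-- The degree `d_i` of vertex `i` in `G`. -/
noncomputable def deg (n : ℕ) (G : SimpleGraph (Fin (n+1))) (i : Fin (n+1)) : ℕ :=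
  Set.ncard {j | G.Adj i j}

/-- `d̄_i`: the number of neighbors of `i` smaller than `i`. -/
noncomputable def dbar (n : ℕ) (G : SimpleGraph (Fin (n+1))) (i : Fin (n+1)) : ℕ :=
  Set.ncard {j | j < i ∧ G.Adj i j}

/-- A `G`-parking function, encoded as `P : Fin (n+1) → ℕ` with `P 0 = 0`. -/
def IsParking (n : ℕ) (G : SimpleGraph (Fin (n+1))) (P : Fin (n+1) → ℕ) : Prop :=
  P 0 = 0 ∧ ∀ S : Finset (Fin (n+1)), S.Nonempty → (0 : Fin (n+1)) ∉ S →
    ∃ i ∈ S, P i < Set.ncard {j | j ∉ S ∧ G.Adj i j}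

/-- `codeg(P) = (|E(G)| - n) - Σ_{i=1}^n P(i)`. -/
noncomputable def codeg (n : ℕ) (G : SimpleGraph (Fin (n+1))) (P : Fin (n+1) → ℕ) : ℕ :=
  (Set.ncard G.edgeSet - n) - ∑ i, P i

/-- `[m]_q` as a Laurent polynomial. -/
noncomputable def lq (m : ℕ) : LaurentPolynomial ℤ :=
  ∑ k ∈ Finset.range m, LaurentPolynomial.T (k : ℤ)

/-- `[b]_{q^m} = 1 + q^m + ⋯ + q^{m(b-1)}` as a Laurent polynomial. -/
noncomputable def lqpow (m b : ℕ) : LaurentPolynomial ℤ :=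
  ∑ k ∈ Finset.range b, LaurentPolynomial.T ((m : ℤ) * k)

/-- `wt_{q,q⁻¹}(b)`: the substitution `t = q⁻¹` in `wt_{q,t}(b) = Σ_{k=0}^{b-1} q^k t^{b-1-k}`,
with `wt_{q,q⁻¹}(0) = 1`. -/
noncomputable def wtqq (b : ℕ) : LaurentPolynomial ℤ :=
  if b = 0 then 1 else ∑ k ∈ Finset.range b, LaurentPolynomial.T (2 * (k : ℤ) - ((b : ℤ) - 1))

/-- `Ehr_{q,q⁻¹}(F_G(a))`: the sum over all integer `a`-flows `f` of
`(-(1-q)(1-q⁻¹))^(s(f)-n) ∏_e wt_{q,q⁻¹}(f(e))`, as a Laurent polynomial in `q`. -/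
noncomputable def Ehrqq (n : ℕ) (G : SimpleGraph (Fin (n+1))) (a : Fin (n+1) → ℕ) :
    LaurentPolynomial ℤ :=
  ∑ᶠ f ∈ {f | IsFlow n G a f},
    (-((1 - LaurentPolynomial.T 1) * (1 - LaurentPolynomial.T (-1)))) ^ (posCount n f - n) *
      ∏ i, ∏ j, wtqq (f i j)

end ThresholdFlow
namespace ThresholdFlow

open scoped Classical

variable {n : ℕ}

/-! ### Increasing spanning trees -/

/-- Increasing spanning tree of `G`, given by its parent function. -/
def Tr (n : ℕ) (G : SimpleGraph (Fin (n+1))) (p : Fin (n+1) → Fin (n+1)) : Prop :=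
  p 0 = 0 ∧ ∀ i, i ≠ 0 → p i < i ∧ G.Adj i (p i)

section Trees

variable {G : SimpleGraph (Fin (n+1))} {p : Fin (n+1) → Fin (n+1)}

lemma Tr.le (h : Tr n G p) (x : Fin (n+1)) : p x ≤ x := by
  rcases eq_or_ne x 0 with rfl | hx
  · exact le_of_eq h.1
  · exact (h.2 x hx).1.le

lemma iter_le (hle : ∀ x, p x ≤ x) : ∀ (k : ℕ) (j : Fin (n+1)), p^[k] j ≤ j := by
  intro k
  induction k with
  | zero => intro j; simp
  | succ k ih =>
      intro j
      rw [Function.iterate_succ_apply']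
      exact (hle _).trans (ih j)

/-- The descendants of `i` (including `i`) as a `Finset`. -/
noncomputable def descF (p : Fin (n+1) → Fin (n+1)) (i : Fin (n+1)) :
    Finset (Fin (n+1)) :=
  Finset.univ.filter (fun j => ∃ k, p^[k] j = i)

lemma mem_descF {i j : Fin (n+1)} : j ∈ descF p i ↔ ∃ k, p^[k] j = i := by
  simp [descF]

lemma self_mem_descF {i : Fin (n+1)} : i ∈ descF p i := mem_descF.2 ⟨0, rfl⟩

lemma descF_card_pos {i : Fin (n+1)} : 0 < (descF p i).card :=
  Finset.card_pos.2 ⟨i, self_mem_descF⟩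

lemma le_of_mem_descF (hle : ∀ x, p x ≤ x) {i j : Fin (n+1)} (h : j ∈ descF p i) :
    i ≤ j := by
  obtain ⟨k, hk⟩ := mem_descF.1 h
  simpa [hk] using iter_le hle k j

lemma descF_trans {i j m : Fin (n+1)} (h1 : j ∈ descF p i) (h2 : m ∈ descF p j) :
    m ∈ descF p i := by
  obtain ⟨a, ha⟩ := mem_descF.1 h1
  obtain ⟨b, hb⟩ := mem_descF.1 h2
  exact mem_descF.2 ⟨a + b, by rw [Function.iterate_add_apply, hb, ha]⟩

/-- Two "ancestors" of the same vertex are comparable along the iterates. -/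
lemma anc_comp {a b : ℕ} {j i i' : Fin (n+1)} (hab : a ≤ b) (h1 : p^[a] j = i)
    (h2 : p^[b] j = i') : p^[b - a] i = i' := by
  have h := Function.iterate_add_apply p (b - a) a j
  rw [Nat.sub_add_cancel hab] at h
  rw [← h2, h, h1]

/-- The children of `i`. -/
noncomputable def chF (p : Fin (n+1) → Fin (n+1)) (i : Fin (n+1)) :
    Finset (Fin (n+1)) :=
  Finset.univ.filter (fun c => p c = i ∧ c ≠ i)

lemma mem_chF {i c : Fin (n+1)} : c ∈ chF p i ↔ p c = i ∧ c ≠ i := by simp [chF]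

lemma chF_ne_zero (hp : Tr n G p) {i c : Fin (n+1)} (hc : c ∈ chF p i) : c ≠ 0 := by
  rintro rfl
  obtain ⟨h1, h2⟩ := mem_chF.1 hc
  exact h2 (h1 ▸ hp.1.symm ▸ rfl)

lemma lt_of_mem_chF (hp : Tr n G p) {i c : Fin (n+1)} (hc : c ∈ chF p i) : i < c := by
  obtain ⟨h1, _⟩ := mem_chF.1 hc
  have := (hp.2 c (chF_ne_zero hp hc)).1
  rw [h1] at this
  exact this

lemma child_of_desc (hp : Tr n G p) {i j : Fin (n+1)} (hj : j ∈ descF p i) (hne : j ≠ i) :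
    ∃ c ∈ chF p i, j ∈ descF p c := by
  have h : ∃ k, p^[k] j = i := mem_descF.1 hj
  classical
  have hk : p^[Nat.find h] j = i := Nat.find_spec h
  have hk0ne : Nat.find h ≠ 0 := by
    intro h0
    rw [h0] at hk
    exact hne hk
  obtain ⟨m, hm⟩ : ∃ m, Nat.find h = m + 1 := ⟨Nat.find h - 1, by omega⟩
  refine ⟨p^[m] j, mem_chF.2 ⟨?_, ?_⟩, mem_descF.2 ⟨m, rfl⟩⟩
  · rw [← Function.iterate_succ_apply' p m j]
    show p^[m+1] j = i
    rw [← hm]; exact hk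
  · intro hEq
    exact Nat.find_min h (by omega) hEq

lemma descF_disj_aux (hp : Tr n G p) {i c c' m : Fin (n+1)} (hc : c ∈ chF p i)
    (hc' : c' ∈ chF p i) {a b : ℕ} (ha : p^[a] m = c) (hb : p^[b] m = c')
    (hab : a ≤ b) : c = c' := by
  have hiter : p^[b - a] c = c' := anc_comp hab ha hb
  rcases Nat.eq_zero_or_pos (b - a) with h0 | hpos
  · rw [h0] at hiter; exact hiter
  · exfalso
    obtain ⟨m', hm'⟩ : ∃ m', b - a = m' + 1 := ⟨b - a - 1, by omega⟩
    rw [hm', Function.iterate_succ_apply, (mem_chF.1 hc).1] at hiter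
    have h1 : p^[m'] i ≤ i := iter_le (fun x => hp.le x) m' i
    rw [hiter] at h1
    exact absurd (lt_of_mem_chF hp hc') (not_lt.2 h1)

lemma descF_disj (hp : Tr n G p) {i c c' : Fin (n+1)} (hc : c ∈ chF p i)
    (hc' : c' ∈ chF p i) (hne : c ≠ c') {m : Fin (n+1)} (hm : m ∈ descF p c)
    (hm' : m ∈ descF p c') : False := by
  obtain ⟨a, ha⟩ := mem_descF.1 hm
  obtain ⟨b, hb⟩ := mem_descF.1 hm'
  rcases le_total a b with hab | hab
  · exact hne (descF_disj_aux hp hc hc' ha hb hab)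
  · exact hne (descF_disj_aux hp hc' hc hb ha hab).symm

lemma descF_eq (hp : Tr n G p) (i : Fin (n+1)) :
    descF p i = insert i ((chF p i).biUnion (descF p)) := by
  ext j
  simp only [Finset.mem_insert, Finset.mem_biUnion]
  constructor
  · intro hj
    rcases eq_or_ne j i with rfl | hne
    · exact Or.inl rfl
    · exact Or.inr (child_of_desc hp hj hne)
  · rintro (rfl | ⟨c, hc, hj⟩)
    · exact self_mem_descF
    · exact descF_trans (mem_descF.2 ⟨1, by simpa using (mem_chF.1 hc).1⟩) hj

lemma card_descF (hp : Tr n G p) (i : Fin (n+1)) :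
    (descF p i).card = 1 + ∑ c ∈ chF p i, (descF p c).card := by
  have hnot : i ∉ (chF p i).biUnion (descF p) := by
    simp only [Finset.mem_biUnion]
    rintro ⟨c, hc, hmem⟩
    exact absurd (le_of_mem_descF hp.le hmem) (not_le.2 (lt_of_mem_chF hp hc))
  have hdisj : ∀ c ∈ chF p i, ∀ c' ∈ chF p i, c ≠ c' →
      Disjoint (descF p c) (descF p c') := by
    intro c hc c' hc' hne
    rw [Finset.disjoint_left]
    intro m hm hm'
    exact descF_disj hp hc hc' hne hm hm'
  rw [descF_eq hp i, Finset.card_insert_of_notMem hnot, Finset.card_biUnion hdisj]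
  omega

lemma descF_zero (hp : Tr n G p) : descF p 0 = Finset.univ := by
  have key : ∀ (m : ℕ) (j : Fin (n+1)), j.val < m → ∃ k, p^[k] j = 0 := by
    intro m
    induction m with
    | zero => intro j hj; omega
    | succ m ih =>
        intro j hj
        rcases eq_or_ne j 0 with rfl | hne
        · exact ⟨0, rfl⟩
        · have hlt : (p j).val < j.val := (hp.2 j hne).1
          obtain ⟨k, hk⟩ := ih (p j) (by omega)
          exact ⟨k + 1, by rw [Function.iterate_succ_apply]; exact hk⟩
  ext j
  simp only [Finset.mem_univ, iff_true]
  exact mem_descF.2 (key (j.val + 1) j (Nat.lt_succ_self _))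

lemma parent_mem_descF {i j : Fin (n+1)} (hj : j ∈ descF p i)
    (hne : j ≠ i) : p j ∈ descF p i := by
  obtain ⟨k, hk⟩ := mem_descF.1 hj
  have hkne : k ≠ 0 := by rintro rfl; exact hne hk
  obtain ⟨m, rfl⟩ : ∃ m, k = m + 1 := ⟨k - 1, by omega⟩
  rw [Function.iterate_succ_apply] at hk
  exact mem_descF.2 ⟨m, hk⟩

/-- Two vertices having a common descendant, with equal parents, coincide. -/
lemma sibling_eq_aux (hp : Tr n G p) {i i' x : Fin (n+1)} (hi' : i' ≠ 0)
    {a b : ℕ} (ha : p^[a] x = i) (hb : p^[b] x = i') (hpp : p i = p i')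
    (hab : a ≤ b) : i = i' := by
  have hiter : p^[b - a] i = i' := anc_comp hab ha hb
  rcases Nat.eq_zero_or_pos (b - a) with h0 | hpos
  · rw [h0] at hiter; exact hiter
  · exfalso
    obtain ⟨m, hm⟩ : ∃ m, b - a = m + 1 := ⟨b - a - 1, by omega⟩
    rw [hm, Function.iterate_succ_apply, hpp] at hiter
    have h1 : p^[m] (p i') ≤ p i' := iter_le (fun x => hp.le x) m (p i')
    rw [hiter] at h1
    exact absurd (hp.2 i' hi').1 (not_lt.2 h1)

/-- Two vertices having a common descendant, with equal parents, coincide. -/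
lemma sibling_eq (hp : Tr n G p) {i i' x : Fin (n+1)} (hi : i ≠ 0) (hi' : i' ≠ 0)
    (hx : x ∈ descF p i) (hx' : x ∈ descF p i') (hpp : p i = p i') : i = i' := by
  obtain ⟨a, ha⟩ := mem_descF.1 hx
  obtain ⟨b, hb⟩ := mem_descF.1 hx'
  rcases le_total a b with hab | hab
  · exact sibling_eq_aux hp hi' ha hb hpp hab
  · exact (sibling_eq_aux hp hi hb ha hpp.symm hab).symm

end Trees

end ThresholdFlow

namespace ThresholdFlow

open scoped Classical

variable {n : ℕ}

section Flows

variable {G : SimpleGraph (Fin (n+1))} {p : Fin (n+1) → Fin (n+1)}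

lemma card_erase_zero : (Finset.univ.erase (0 : Fin (n+1))).card = n := by
  rw [Finset.card_erase_of_mem (Finset.mem_univ _), Finset.card_univ, Fintype.card_fin]
  omega

/-- The canonical flow associated to an increasing spanning tree. -/
noncomputable def Fl (p : Fin (n+1) → Fin (n+1)) : Fin (n+1) → Fin (n+1) → ℕ :=
  fun i j => if i ≠ 0 ∧ j = p i then (descF p i).card else 0

lemma Fl_ne_zero_iff {i j : Fin (n+1)} : Fl p i j ≠ 0 ↔ i ≠ 0 ∧ j = p i := by
  unfold Fl
  constructor
  · intro h
    by_contra hc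
    rw [if_neg hc] at h
    exact h rfl
  · intro h
    rw [if_pos h]
    exact Nat.pos_iff_ne_zero.1 descF_card_pos

lemma chF_eq_filter (hp : Tr n G p) {i : Fin (n+1)} (hi : i ≠ 0) :
    Finset.univ.filter (fun j => j ≠ 0 ∧ i = p j) = chF p i := by
  ext c
  simp only [Finset.mem_filter, Finset.mem_univ, true_and, mem_chF]
  constructor
  · rintro ⟨h0, rfl⟩
    refine ⟨rfl, fun hEq => ?_⟩
    have := (hp.2 c h0).1
    rw [← hEq] at this
    exact lt_irrefl _ this
  · rintro ⟨rfl, hne⟩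
    have h0 : c ≠ 0 := by
      rintro rfl
      exact hne (by rw [hp.1])
    exact ⟨h0, rfl⟩

lemma Fl_isFlow (hp : Tr n G p) : IsFlow n G (fun _ => 1) (Fl p) := by
  constructor
  · intro i j hne
    obtain ⟨hi, rfl⟩ := Fl_ne_zero_iff.1 hne
    exact ⟨(hp.2 i hi).1, (hp.2 i hi).2⟩
  · intro i hi
    have hout : ∑ j, Fl p i j = (descF p i).card := by
      have h1 : ∑ j, Fl p i j = Fl p i (p i) := by
        apply Finset.sum_eq_single (p i)
        · intro b _ hb
          simp [Fl, hb]
        · intro h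
          exact absurd (Finset.mem_univ _) h
      rw [h1]
      simp [Fl, hi]
    have hin : ∑ j, Fl p j i = ∑ c ∈ chF p i, (descF p c).card := by
      rw [← chF_eq_filter hp hi, Finset.sum_filter]
      apply Finset.sum_congr rfl
      intro j _
      simp only [Fl]
    rw [hout, hin, card_descF hp i]

lemma posCount_Fl (hp : Tr n G p) : posCount n (Fl p) = n := by
  unfold posCount
  have hset : (Finset.univ.filter fun pr : Fin (n+1) × Fin (n+1) => 0 < Fl p pr.1 pr.2)
      = (Finset.univ.erase 0).image (fun i => (i, p i)) := by
    ext pr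
    obtain ⟨i, j⟩ := pr
    simp only [Finset.mem_filter, Finset.mem_univ, true_and, Finset.mem_image,
      Finset.mem_erase]
    constructor
    · intro h
      have h' := Fl_ne_zero_iff.1 h.ne'
      exact ⟨i, ⟨h'.1, trivial⟩, by rw [h'.2]⟩
    · rintro ⟨a, ⟨ha, -⟩, hEq⟩
      rw [Prod.ext_iff] at hEq
      obtain ⟨h1, h2⟩ := hEq
      simp only at h1 h2
      subst h1
      subst h2
      exact Nat.pos_of_ne_zero (Fl_ne_zero_iff.2 ⟨ha, rfl⟩)
  rw [hset, Finset.card_image_of_injOn (fun a _ b _ h => (Prod.ext_iff.1 h).1)]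
  exact card_erase_zero

/-- Flows with exactly `n` positive entries come from increasing spanning trees. -/
lemma flow_eq_Fl {f : Fin (n+1) → Fin (n+1) → ℕ} (hf : IsFlow n G (fun _ => 1) f)
    (hcnt : posCount n f = n) : ∃ p, Tr n G p ∧ f = Fl p := by
  have hrow0 : ∀ j, f 0 j = 0 := by
    intro j
    by_contra h
    have := (hf.1 0 j h).1
    simp [Fin.lt_def] at this
  set c : Fin (n+1) → ℕ := fun i => (Finset.univ.filter (fun j => f i j ≠ 0)).card with hc
  have hc0 : c 0 = 0 := by
    simp only [hc, Finset.card_eq_zero]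
    ext j
    simp [hrow0]
  have hcpos : ∀ i : Fin (n+1), i ≠ 0 → 1 ≤ c i := by
    intro i hi
    rw [Nat.one_le_iff_ne_zero, Ne, Finset.card_eq_zero]
    intro hempty
    have hz : ∀ j, f i j = 0 := by
      intro j
      by_contra h
      have hj : j ∈ Finset.univ.filter (fun j => f i j ≠ 0) :=
        Finset.mem_filter.2 ⟨Finset.mem_univ _, h⟩
      rw [hempty] at hj
      exact absurd hj (Finset.notMem_empty _)
    have hcons := hf.2 i hi
    rw [Finset.sum_eq_zero (fun j _ => hz j)] at hcons
    simp only at hcons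
    omega
  have htot : ∑ i, c i = n := by
    have h2 : posCount n f = ∑ i, c i := by
      unfold posCount
      rw [Finset.card_eq_sum_card_fiberwise
        (f := Prod.fst) (t := Finset.univ) (fun x _ => Finset.mem_univ _)]
      apply Finset.sum_congr rfl
      intro i _
      have himg : ((Finset.univ.filter fun pr : Fin (n+1) × Fin (n+1) =>
            0 < f pr.1 pr.2).filter fun pr => pr.1 = i)
          = (Finset.univ.filter (fun j => f i j ≠ 0)).image (fun j => (i, j)) := by
        ext pr
        obtain ⟨a, b⟩ := pr
        simp only [Finset.mem_filter, Finset.mem_univ, true_and, Finset.mem_image]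
        constructor
        · rintro ⟨hpos, rfl⟩
          exact ⟨b, hpos.ne', rfl⟩
        · rintro ⟨j, hj, hEq⟩
          rw [Prod.ext_iff] at hEq
          obtain ⟨h1, h2⟩ := hEq
          simp only at h1 h2
          subst h1
          subst h2
          exact ⟨Nat.pos_of_ne_zero hj, rfl⟩
      rw [himg, Finset.card_image_of_injOn (fun a _ b _ h => (Prod.ext_iff.1 h).2)]
    have h3 := hcnt
    rw [h2] at h3
    exact h3
  have herase : ∑ i ∈ Finset.univ.erase (0 : Fin (n+1)), c i = n := by
    have := Finset.add_sum_erase Finset.univ c (Finset.mem_univ (0 : Fin (n+1)))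
    rw [hc0, zero_add] at this
    rw [this, htot]
  have hcard : (Finset.univ.erase (0 : Fin (n+1))).card = n := card_erase_zero
  have hone : ∀ i ∈ Finset.univ.erase (0 : Fin (n+1)), 1 = c i := by
    have hsum1 : ∑ _i ∈ Finset.univ.erase (0 : Fin (n+1)), 1 =
        ∑ i ∈ Finset.univ.erase (0 : Fin (n+1)), c i := by
      rw [herase, Finset.sum_const, hcard, smul_eq_mul, mul_one]
    exact (Finset.sum_eq_sum_iff_of_le
      (fun i hi => hcpos i (Finset.mem_erase.1 hi).1)).1 hsum1
  have hex : ∀ i : Fin (n+1), i ≠ 0 → ∃ j, f i j ≠ 0 ∧ ∀ j', f i j' ≠ 0 → j' = j := by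
    intro i hi
    have h1 : c i = 1 := (hone i (Finset.mem_erase.2 ⟨hi, Finset.mem_univ _⟩)).symm
    obtain ⟨j, hj⟩ := Finset.card_eq_one.1 h1
    have hjmem : j ∈ Finset.univ.filter (fun j => f i j ≠ 0) := by
      rw [hj]; exact Finset.mem_singleton_self j
    refine ⟨j, (Finset.mem_filter.1 hjmem).2, fun j' hj' => ?_⟩
    have : j' ∈ Finset.univ.filter (fun j => f i j ≠ 0) :=
      Finset.mem_filter.2 ⟨Finset.mem_univ _, hj'⟩
    rw [hj] at this
    exact Finset.mem_singleton.1 this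
  choose p0 hp1 hp2 using hex
  set p : Fin (n+1) → Fin (n+1) := fun i => if h : i = 0 then 0 else p0 i h with hpdef
  have hpne : ∀ (i : Fin (n+1)) (hi : i ≠ 0), p i = p0 i hi := by
    intro i hi
    simp [hpdef, hi]
  have hchar : ∀ i j, f i j ≠ 0 ↔ (i ≠ 0 ∧ j = p i) := by
    intro i j
    constructor
    · intro h
      have hi : i ≠ 0 := by rintro rfl; exact h (hrow0 j)
      rw [hpne i hi]
      exact ⟨hi, hp2 i hi j h⟩
    · rintro ⟨hi, rfl⟩
      rw [hpne i hi]
      exact hp1 i hi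
  have htr : Tr n G p := by
    constructor
    · simp [hpdef]
    · intro i hi
      have := hf.1 i (p i) ((hchar i (p i)).2 ⟨hi, rfl⟩)
      exact ⟨this.1, this.2⟩
  have key : ∀ (m : ℕ) (i : Fin (n+1)), n + 1 ≤ m + i.val → i ≠ 0 →
      f i (p i) = (descF p i).card := by
    intro m
    induction m with
    | zero =>
        intro i hle hi
        have := i.isLt
        omega
    | succ m ih =>
        intro i hle hi
        have hout : ∑ j, f i j = f i (p i) := by
          apply Finset.sum_eq_single (p i)
          · intro b _ hb
            by_contra hnz
            exact hb ((hchar i b).1 hnz).2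
          · intro h
            exact absurd (Finset.mem_univ _) h
        have hin : ∑ j, f j i = ∑ c ∈ chF p i, (descF p c).card := by
          have hfil : ∑ j ∈ Finset.univ.filter (fun j => j ≠ 0 ∧ i = p j), f j i
              = ∑ j, f j i := by
            apply Finset.sum_filter_of_ne
            intro x _ hx
            have := (hchar x i).1 hx
            exact ⟨this.1, this.2⟩
          rw [← hfil, chF_eq_filter htr hi]
          apply Finset.sum_congr rfl
          intro j hj
          have hj0 : j ≠ 0 := chF_ne_zero htr hj
          have hji : i < j := lt_of_mem_chF htr hj
          have : f j i = f j (p j) := by rw [(mem_chF.1 hj).1]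
          rw [this, ih j (by omega) hj0]
        have hcons := hf.2 i hi
        rw [hout, hin] at hcons
        rw [hcons, card_descF htr i]
  refine ⟨p, htr, ?_⟩
  funext i j
  by_cases h : i ≠ 0 ∧ j = p i
  · obtain ⟨hi, rfl⟩ := h
    rw [key (n+1) i (by omega) hi]
    simp [Fl, hi]
  · have h0 : f i j = 0 := by
      by_contra hnz
      exact h ((hchar i j).1 hnz)
    rw [h0, Fl, if_neg h]

lemma Fl_injOn : Set.InjOn Fl {p : Fin (n+1) → Fin (n+1) | Tr n G p} := by
  intro p hp p' hp' hEq
  have hp : Tr n G p := hp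
  have hp' : Tr n G p' := hp'
  funext i
  rcases eq_or_ne i 0 with rfl | hi
  · rw [hp.1, hp'.1]
  · have h1 : Fl p i (p i) ≠ 0 := Fl_ne_zero_iff.2 ⟨hi, rfl⟩
    rw [hEq] at h1
    exact (Fl_ne_zero_iff.1 h1).2

end Flows

end ThresholdFlow

namespace ThresholdFlow

open scoped Classical

variable {n : ℕ}

section Expand

variable {G : SimpleGraph (Fin (n+1))} {p : Fin (n+1) → Fin (n+1)}

lemma sum_pow_card_powerset (D : Finset (Fin (n+1))) (x : Polynomial ℤ) :
    ∑ T ∈ D.powerset, x ^ T.card = (x + 1) ^ D.card := by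
  have h := Finset.prod_add (fun _ : Fin (n+1) => x) (fun _ => 1) D
  rw [Finset.prod_const] at h
  rw [h]
  apply Finset.sum_congr rfl
  intro T hT
  rw [Finset.prod_const, Finset.prod_const, one_pow, mul_one]

lemma qnat_expand (D : Finset (Fin (n+1))) :
    qnat D.card
      = ∑ T ∈ D.powerset.filter (fun T => T.Nonempty),
          ((X : Polynomial ℤ) - 1) ^ (T.card - 1) := by
  have hX : (X - 1 : Polynomial ℤ) ≠ 0 := fun h => by
    have := congrArg (Polynomial.eval 0) h
    simp at this
  apply mul_left_cancel₀ hX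
  rw [Finset.mul_sum]
  have hL : (X - 1 : Polynomial ℤ) * qnat D.card = X ^ D.card - 1 := by
    rw [mul_comm, qnat, geom_sum_mul]
  rw [hL]
  have hR : ∀ T ∈ D.powerset.filter (fun T => T.Nonempty),
      (X - 1 : Polynomial ℤ) * (X - 1) ^ (T.card - 1) = (X - 1) ^ T.card := by
    intro T hT
    have hne : T.Nonempty := (Finset.mem_filter.1 hT).2
    have hc : 1 ≤ T.card := Finset.card_pos.2 hne
    calc (X - 1 : Polynomial ℤ) * (X - 1) ^ (T.card - 1)
        = (X - 1) ^ (T.card - 1) * (X - 1) := mul_comm _ _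
      _ = (X - 1) ^ (T.card - 1 + 1) := (pow_succ _ _).symm
      _ = (X - 1) ^ T.card := by congr 1; omega
  rw [Finset.sum_congr rfl hR]
  have hempty : D.powerset.filter (fun T => ¬ T.Nonempty) = {∅} := by
    ext T
    simp only [Finset.mem_filter, Finset.mem_powerset, Finset.not_nonempty_iff_eq_empty,
      Finset.mem_singleton]
    constructor
    · rintro ⟨-, rfl⟩; rfl
    · rintro rfl; exact ⟨Finset.empty_subset _, rfl⟩
  have hsplit := Finset.sum_filter_add_sum_filter_not D.powerset (fun T => T.Nonempty)
      (fun T => (X - 1 : Polynomial ℤ) ^ T.card)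
  rw [hempty] at hsplit
  simp only [Finset.sum_singleton, Finset.card_empty, pow_zero] at hsplit
  rw [sum_pow_card_powerset D (X - 1)] at hsplit
  have hXX : (X - 1 + 1 : Polynomial ℤ) = X := by ring
  rw [hXX] at hsplit
  exact (eq_sub_of_add_eq hsplit).symm

/-- The increasing spanning trees of `G` as a `Finset`. -/
noncomputable def treeF (n : ℕ) (G : SimpleGraph (Fin (n+1))) :
    Finset (Fin (n+1) → Fin (n+1)) :=
  Finset.univ.filter (Tr n G)

lemma mem_treeF : p ∈ treeF n G ↔ Tr n G p := by simp [treeF]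

/-- The family of admissible subset choices at each vertex. -/
noncomputable def tFam (p : Fin (n+1) → Fin (n+1)) (i : Fin (n+1)) :
    Finset (Finset (Fin (n+1))) :=
  if i = 0 then {∅} else (descF p i).powerset.filter (fun T => T.Nonempty)

lemma weight_Fl (hp : Tr n G p) :
    (∏ i, ∏ j, if 0 < Fl p i j then qnat (Fl p i j) else 1)
      = ∏ i, (if i = 0 then 1 else qnat ((descF p i).card)) := by
  apply Finset.prod_congr rfl
  intro i _
  rcases eq_or_ne i 0 with rfl | hi
  · rw [if_pos rfl]
    apply Finset.prod_eq_one
    intro j _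
    rw [if_neg]
    simp [Fl]
  · rw [if_neg hi]
    have h1 : (∏ j, if 0 < Fl p i j then qnat (Fl p i j) else 1)
        = (if 0 < Fl p i (p i) then qnat (Fl p i (p i)) else 1) := by
      apply Finset.prod_eq_single (p i)
      · intro b _ hb
        rw [if_neg]
        simp only [not_lt, Nat.le_zero]
        rw [Fl, if_neg (fun hc => hb hc.2)]
      · intro h
        exact absurd (Finset.mem_univ _) h
    rw [h1]
    have h2 : Fl p i (p i) = (descF p i).card := by
      rw [Fl, if_pos ⟨hi, rfl⟩]
    rw [h2, if_pos descF_card_pos]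

lemma tree_weight_expand (hp : Tr n G p) :
    (∏ i, (if i = 0 then 1 else qnat ((descF p i).card)))
      = ∑ g ∈ Fintype.piFinset (tFam p),
          ((X : Polynomial ℤ) - 1) ^ (∑ i, ((g i).card - 1)) := by
  have h1 : ∀ i : Fin (n+1), (if i = 0 then 1 else qnat ((descF p i).card))
      = ∑ T ∈ tFam p i, ((X : Polynomial ℤ) - 1) ^ (T.card - 1) := by
    intro i
    rcases eq_or_ne i 0 with rfl | hi
    · simp [tFam]
    · rw [if_neg hi, tFam, if_neg hi, qnat_expand]
  rw [Finset.prod_congr rfl (fun i _ => h1 i), Finset.prod_univ_sum]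
  apply Finset.sum_congr rfl
  intro g _
  rw [Finset.prod_pow_eq_pow_sum]

lemma Ehr1_eq_sigma (G : SimpleGraph (Fin (n+1))) :
    Ehr1 n G (fun _ => 1)
      = ∑ x ∈ (treeF n G).sigma (fun p => Fintype.piFinset (tFam p)),
          ((X : Polynomial ℤ) - 1) ^ (∑ i, ((x.2 i).card - 1)) := by
  unfold Ehr1
  have hset : {f | IsFlow n G (fun _ => 1) f ∧ posCount n f = n}
      = Fl '' (↑(treeF n G) : Set (Fin (n+1) → Fin (n+1))) := by
    ext f
    simp only [Set.mem_setOf_eq, Set.mem_image, Finset.mem_coe]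
    constructor
    · rintro ⟨h1, h2⟩
      obtain ⟨p, hp, rfl⟩ := flow_eq_Fl h1 h2
      exact ⟨p, mem_treeF.2 hp, rfl⟩
    · rintro ⟨p, hp, rfl⟩
      have hp' := mem_treeF.1 hp
      exact ⟨Fl_isFlow hp', posCount_Fl hp'⟩
  rw [hset]
  rw [finsum_mem_image (s := (↑(treeF n G) : Set (Fin (n+1) → Fin (n+1)))) (g := Fl)
    (Fl_injOn.mono (fun p hp => mem_treeF.1 hp))]
  rw [finsum_mem_coe_finset]
  have hdouble : (∑ p ∈ treeF n G, ∏ i, ∏ j, if 0 < Fl p i j then qnat (Fl p i j) else 1)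
      = ∑ p ∈ treeF n G, ∑ g ∈ Fintype.piFinset (tFam p),
          ((X : Polynomial ℤ) - 1) ^ (∑ i, ((g i).card - 1)) := by
    apply Finset.sum_congr rfl
    intro p hp
    have hp' := mem_treeF.1 hp
    rw [weight_Fl hp', tree_weight_expand hp']
  rw [hdouble, Finset.sum_sigma']

end Expand

end ThresholdFlow

namespace ThresholdFlow

open scoped Classical

variable {n : ℕ}

section Reach

variable {G : SimpleGraph (Fin (n+1))} {p : Fin (n+1) → Fin (n+1)}
variable {g : Fin (n+1) → Finset (Fin (n+1))}
variable {A : Finset (Fin (n+1) × Fin (n+1))}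

/-- One step of reachability through `A`, with all endpoints of value at least `b`. -/
def rrel (A : Finset (Fin (n+1) × Fin (n+1))) (b : ℕ) (u v : Fin (n+1)) : Prop :=
  b ≤ u.val ∧ b ≤ v.val ∧ ((u, v) ∈ A ∨ (v, u) ∈ A)

/-- Reachability through `A` within the set of vertices of value at least `b`. -/
def rch (A : Finset (Fin (n+1) × Fin (n+1))) (b : ℕ) (u v : Fin (n+1)) : Prop :=
  Relation.ReflTransGen (rrel A b) u v

lemma rrel_symm {b : ℕ} {u v : Fin (n+1)} (h : rrel A b u v) : rrel A b v u :=
  ⟨h.2.1, h.1, h.2.2.symm⟩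

lemma rch_refl {b : ℕ} {u : Fin (n+1)} : rch A b u u := Relation.ReflTransGen.refl

lemma rch_symm {b : ℕ} {u v : Fin (n+1)} (h : rch A b u v) : rch A b v u :=
  by haveI : Std.Symm (rrel A b) := ⟨fun _ _ h' => rrel_symm h'⟩; exact Std.Symm.symm (r := Relation.ReflTransGen (rrel A b)) _ _ h

lemma rch_trans {b : ℕ} {u v w : Fin (n+1)} (h1 : rch A b u v) (h2 : rch A b v w) :
    rch A b u w :=
  Relation.ReflTransGen.trans h1 h2

lemma rch_mono {b b' : ℕ} (hb : b' ≤ b) {u v : Fin (n+1)} (h : rch A b u v) :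
    rch A b' u v :=
  Relation.ReflTransGen.mono (fun x y hxy => ⟨hb.trans hxy.1, hb.trans hxy.2.1, hxy.2.2⟩) _ _ h

lemma rch_bound {b : ℕ} {u v : Fin (n+1)} (h : rch A b u v) :
    u = v ∨ (b ≤ u.val ∧ b ≤ v.val) := by
  induction h with
  | refl => exact Or.inl rfl
  | tail h1 h2 ih =>
      right
      refine ⟨?_, h2.2.1⟩
      rcases ih with rfl | hb
      · exact h2.1
      · exact hb.1

lemma rch_upgrade {b c : ℕ} {u v : Fin (n+1)} (h : rch A b u v)
    (H : ∀ w, rch A b u w → c ≤ w.val) : rch A c u v := by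
  induction h with
  | refl => exact rch_refl
  | tail h1 h2 ih =>
      exact Relation.ReflTransGen.tail ih ⟨H _ h1, H _ (h1.tail h2), h2.2.2⟩

lemma comp_min (A : Finset (Fin (n+1) × Fin (n+1))) (b : ℕ) (x : Fin (n+1)) :
    ∃ m, rch A b x m ∧ ∀ w, rch A b x w → m ≤ w := by
  have hne : (Finset.univ.filter (fun w => rch A b x w)).Nonempty :=
    ⟨x, Finset.mem_filter.2 ⟨Finset.mem_univ _, rch_refl⟩⟩
  refine ⟨(Finset.univ.filter (fun w => rch A b x w)).min' hne, ?_, ?_⟩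
  · exact (Finset.mem_filter.1 (Finset.min'_mem _ hne)).2
  · intro w hw
    exact Finset.min'_le _ _ (Finset.mem_filter.2 ⟨Finset.mem_univ _, hw⟩)

/-- The forward map of the bijection: the connected subgraph associated to a tree with
subset choices. -/
noncomputable def Phi (p : Fin (n+1) → Fin (n+1)) (g : Fin (n+1) → Finset (Fin (n+1))) :
    Finset (Fin (n+1) × Fin (n+1)) :=
  ((Finset.univ.erase 0).sigma (fun i => g i)).image
    (fun x : (_ : Fin (n+1)) × Fin (n+1) => (x.2, p x.1))

lemma mem_Phi {x y : Fin (n+1)} :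
    (x, y) ∈ Phi p g ↔ ∃ i, i ≠ 0 ∧ x ∈ g i ∧ y = p i := by
  unfold Phi
  simp only [Finset.mem_image, Finset.mem_sigma, Finset.mem_erase,
    Finset.mem_univ, and_true, true_and]
  constructor
  · rintro ⟨⟨i, s⟩, ⟨hi, hs⟩, hEq⟩
    rw [Prod.ext_iff] at hEq
    obtain ⟨h1, h2⟩ := hEq
    simp only at h1 h2
    exact ⟨i, hi, h1 ▸ hs, h2.symm⟩
  · rintro ⟨i, hi, hx, rfl⟩
    exact ⟨⟨i, x⟩, ⟨hi, hx⟩, rfl⟩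

lemma g_zero (h : g 0 ∈ tFam p 0) : g 0 = ∅ := by
  rw [tFam, if_pos rfl] at h
  simpa using h

lemma g_sub {i : Fin (n+1)} (hi : i ≠ 0) (h : g i ∈ tFam p i) : g i ⊆ descF p i := by
  rw [tFam, if_neg hi] at h
  exact Finset.mem_powerset.1 (Finset.mem_filter.1 h).1

lemma g_ne {i : Fin (n+1)} (hi : i ≠ 0) (h : g i ∈ tFam p i) : (g i).Nonempty := by
  rw [tFam, if_neg hi] at h
  exact (Finset.mem_filter.1 h).2

lemma Phi_valid (hG : IsThreshold n G) (hp : Tr n G p) (hg : ∀ i, g i ∈ tFam p i) :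
    ∀ e ∈ Phi p g, e.2 < e.1 ∧ G.Adj e.1 e.2 := by
  rintro ⟨x, y⟩ he
  obtain ⟨i, hi, hx, rfl⟩ := mem_Phi.1 he
  have hxd : x ∈ descF p i := g_sub hi (hg i) hx
  have hix : i ≤ x := le_of_mem_descF hp.le hxd
  have hpi : p i < i := (hp.2 i hi).1
  refine ⟨lt_of_lt_of_le hpi hix, ?_⟩
  rcases eq_or_ne x i with rfl | hne
  · exact (hp.2 x hi).2
  · have hx0 : x ≠ 0 := by
      intro h0
      rw [h0] at hix
      exact hi (Fin.le_zero_iff.1 hix)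
    have hpx : p x ∈ descF p i := parent_mem_descF hxd hne
    have hppx : p i ≤ p x := le_trans hpi.le (le_of_mem_descF hp.le hpx)
    exact hG x (p x) x (p i) (hp.2 x hx0).1 (hp.2 x hx0).2 le_rfl hppx
      (lt_of_lt_of_le hpi hix).ne'

lemma card_Phi (hp : Tr n G p) (hg : ∀ i, g i ∈ tFam p i) :
    (Phi p g).card = ∑ i ∈ Finset.univ.erase 0, (g i).card := by
  have hinj : Set.InjOn (fun x : (_ : Fin (n+1)) × Fin (n+1) => (x.2, p x.1))
      ↑((Finset.univ.erase (0 : Fin (n+1))).sigma (fun i => g i)) := by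
    intro a ha b hb hEq
    simp only [Finset.mem_coe, Finset.mem_sigma, Finset.mem_erase, Finset.mem_univ,
      and_true, true_and] at ha hb
    rw [Prod.ext_iff] at hEq
    obtain ⟨h1, h2⟩ := hEq
    simp only at h1 h2
    have ha2 : a.2 ∈ descF p a.1 := g_sub ha.1 (hg a.1) ha.2
    have hb2 : b.2 ∈ descF p b.1 := g_sub hb.1 (hg b.1) hb.2
    have hfst : a.1 = b.1 := sibling_eq hp ha.1 hb.1 ha2 (h1 ▸ hb2) h2
    exact Sigma.ext hfst (heq_of_eq (by rw [h1]))
  unfold Phi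
  rw [Finset.card_image_of_injOn hinj, Finset.card_sigma]

lemma Phi_rch_of_desc (hp : Tr n G p) (hg : ∀ i, g i ∈ tFam p i) :
    ∀ (i j : Fin (n+1)), j ∈ descF p i → rch (Phi p g) i.val i j := by
  have key : ∀ (m : ℕ) (i : Fin (n+1)), n + 1 ≤ m + i.val →
      ∀ j ∈ descF p i, rch (Phi p g) i.val i j := by
    intro m
    induction m with
    | zero =>
        intro i h
        have := i.isLt
        omega
    | succ m ih =>
        intro i h j hj
        rcases eq_or_ne j i with rfl | hne
        · exact rch_refl
        · obtain ⟨c, hc, hjc⟩ := child_of_desc hp hj hne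
          have hci : i < c := lt_of_mem_chF hp hc
          have hc0 : c ≠ 0 := chF_ne_zero hp hc
          have hrec : ∀ j' ∈ descF p c, rch (Phi p g) c.val c j' :=
            fun j' hj' => ih c (by have := hci; omega) j' hj'
          obtain ⟨s, hs⟩ := g_ne hc0 (hg c)
          have hsA : (s, i) ∈ Phi p g := mem_Phi.2 ⟨c, hc0, hs, ((mem_chF.1 hc).1).symm⟩
          have hsd : s ∈ descF p c := g_sub hc0 (hg c) hs
          have his : i ≤ s := le_trans hci.le (le_of_mem_descF hp.le hsd)
          have h1 : rch (Phi p g) i.val i s :=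
            Relation.ReflTransGen.single (rrel_symm ⟨his, le_rfl, Or.inl hsA⟩)
          have h2 : rch (Phi p g) i.val s c :=
            rch_mono hci.le (rch_symm (hrec s hsd))
          have h3 : rch (Phi p g) i.val c j := rch_mono hci.le (hrec j hjc)
          exact rch_trans h1 (rch_trans h2 h3)
  intro i j hj
  exact key (n+1) i (by omega) j hj

lemma Phi_desc_of_rch (hp : Tr n G p) (hg : ∀ i, g i ∈ tFam p i) {i v : Fin (n+1)}
    (h : rch (Phi p g) i.val i v) : v ∈ descF p i := by
  rcases eq_or_ne i 0 with rfl | hi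
  · rw [descF_zero hp]
    exact Finset.mem_univ v
  · induction h with
    | refl => exact self_mem_descF
    | @tail w v' h1 h2 ih =>
        rcases h2.2.2 with hA | hA
        · -- (w, v') ∈ Phi : w ∈ g c, v' = p c
          obtain ⟨c, hc0, hwc, rfl⟩ := mem_Phi.1 hA
          have hwd : w ∈ descF p c := g_sub hc0 (hg c) hwc
          obtain ⟨a, ha⟩ := mem_descF.1 ih
          obtain ⟨b, hb⟩ := mem_descF.1 hwd
          rcases le_total a b with hab | hab
          · -- c below i: p c ≤ i, and bound gives i ≤ p c
            have hiter : p^[b - a] i = c := anc_comp hab ha hb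
            have hle : p (p^[b-a] i) ≤ i := by
              have h1 : p^[b - a + 1] i ≤ i := iter_le hp.le _ i
              rw [Function.iterate_succ_apply'] at h1
              exact h1
            rw [hiter] at hle
            have hge : i.val ≤ (p c).val := h2.2.1
            have : p c = i := le_antisymm hle (by exact hge)
            rw [this]
            exact self_mem_descF
          · have hiter : p^[a - b] c = i := anc_comp hab hb ha
            have hpos : a - b ≠ 0 := by
              intro h0
              rw [h0] at hiter
              simp only [Function.iterate_zero, id_eq] at hiter
              -- c = i : then p c = p i < i, but bound i ≤ p c
              have hge : i.val ≤ (p c).val := h2.2.1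
              have : p i < i := (hp.2 i hi).1
              rw [hiter] at hge
              exact absurd this (by rw [Fin.lt_def]; omega)
            obtain ⟨m, hm⟩ : ∃ m, a - b = m + 1 := ⟨a - b - 1, by omega⟩
            rw [hm, Function.iterate_succ_apply] at hiter
            exact mem_descF.2 ⟨m, hiter⟩
        · -- (v', w) ∈ Phi : v' ∈ g c, w = p c
          obtain ⟨c, hc0, hvc, hw⟩ := mem_Phi.1 hA
          have hcd : c ∈ descF p i := by
            refine descF_trans ih ?_
            rw [hw]
            exact mem_descF.2 ⟨1, by simp⟩
          exact descF_trans hcd (g_sub hc0 (hg c) hvc)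

lemma Phi_connected (hp : Tr n G p) (hg : ∀ i, g i ∈ tFam p i)
    (hval : ∀ e ∈ Phi p g, e.2 < e.1 ∧ G.Adj e.1 e.2) :
    (SimpleGraph.fromRel fun i j => (i, j) ∈ Phi p g).Connected := by
  rw [SimpleGraph.connected_iff]
  refine ⟨?_, ⟨0⟩⟩
  intro u v
  have key : ∀ w : Fin (n+1),
      (SimpleGraph.fromRel fun i j => (i, j) ∈ Phi p g).Reachable 0 w := by
    intro w
    have hr : rch (Phi p g) ((0 : Fin (n+1)).val) 0 w :=
      Phi_rch_of_desc hp hg 0 w (by rw [descF_zero hp]; exact Finset.mem_univ w)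
    rw [SimpleGraph.reachable_iff_reflTransGen]
    refine Relation.ReflTransGen.mono ?_ _ _ hr
    intro a b hab
    rw [SimpleGraph.fromRel_adj]
    refine ⟨?_, hab.2.2⟩
    rcases hab.2.2 with hA | hA
    · exact ((hval _ hA).1).ne'
    · exact ((hval _ hA).1).ne
  exact (key u).symm.trans (key v)

lemma sum_card_sub_one (hp : Tr n G p) (hg : ∀ i, g i ∈ tFam p i) :
    ∑ i, ((g i).card - 1) = (∑ i ∈ Finset.univ.erase 0, (g i).card) - n := by
  have h0 : (g 0).card - 1 = 0 := by rw [g_zero (hg 0)]; simp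
  have hsum : ∑ i, ((g i).card - 1) = ∑ i ∈ Finset.univ.erase 0, ((g i).card - 1) := by
    rw [← Finset.add_sum_erase _ _ (Finset.mem_univ (0 : Fin (n+1))), h0, zero_add]
  rw [hsum]
  have hone : ∀ i ∈ Finset.univ.erase (0 : Fin (n+1)), 1 ≤ (g i).card := fun i hi =>
    Finset.card_pos.2 (g_ne (Finset.mem_erase.1 hi).1 (hg i))
  have key : (∑ i ∈ Finset.univ.erase (0 : Fin (n+1)), ((g i).card - 1))
      + (Finset.univ.erase (0 : Fin (n+1))).card
      = ∑ i ∈ Finset.univ.erase (0 : Fin (n+1)), (g i).card := by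
    rw [Finset.card_eq_sum_ones, ← Finset.sum_add_distrib]
    apply Finset.sum_congr rfl
    intro i hi
    have := hone i hi
    omega
  rw [card_erase_zero] at key
  omega

end Reach

end ThresholdFlow

namespace ThresholdFlow

open scoped Classical

variable {n : ℕ}

section Psi

variable {G : SimpleGraph (Fin (n+1))} {p : Fin (n+1) → Fin (n+1)}
variable {g : Fin (n+1) → Finset (Fin (n+1))}
variable {A : Finset (Fin (n+1) × Fin (n+1))}

/-- The proper "ancestors" of `j` determined by the subgraph `A`. -/
noncomputable def ancS (A : Finset (Fin (n+1) × Fin (n+1))) (j : Fin (n+1)) :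
    Finset (Fin (n+1)) :=
  Finset.univ.filter (fun y => y ≠ j ∧ rch A y.val j y)

lemma mem_ancS {j y : Fin (n+1)} : y ∈ ancS A j ↔ y ≠ j ∧ rch A y.val j y := by
  simp [ancS]

lemma ancS_lt {j y : Fin (n+1)} (h : y ∈ ancS A j) : y < j := by
  obtain ⟨hne, hr⟩ := mem_ancS.1 h
  rcases rch_bound hr with h1 | h1
  · exact absurd h1.symm hne
  · exact lt_of_le_of_ne (Fin.le_def.2 h1.1) hne

/-- The parent function recovered from `A`. -/
noncomputable def pA (A : Finset (Fin (n+1) × Fin (n+1))) (j : Fin (n+1)) : Fin (n+1) :=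
  if h : (ancS A j).Nonempty then (ancS A j).max' h else 0

lemma ancS_zero : ancS (A := A) 0 = ∅ := by
  apply Finset.eq_empty_of_forall_notMem
  intro y hy
  have := ancS_lt hy
  rw [Fin.lt_def] at this
  simp at this

lemma pA_zero : pA A 0 = 0 := by
  rw [pA, ancS_zero]
  simp

lemma conn_rch (hconn : (SimpleGraph.fromRel fun i j => (i, j) ∈ A).Connected)
    (v : Fin (n+1)) : rch A 0 v 0 := by
  have hreach := hconn.preconnected v 0
  rw [SimpleGraph.reachable_iff_reflTransGen] at hreach
  refine Relation.ReflTransGen.mono ?_ _ _ hreach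
  intro a b hab
  rw [SimpleGraph.fromRel_adj] at hab
  exact ⟨Nat.zero_le _, Nat.zero_le _, hab.2⟩

lemma ancS_nonempty (hconn : (SimpleGraph.fromRel fun i j => (i, j) ∈ A).Connected)
    {j : Fin (n+1)} (hj : j ≠ 0) : (ancS A j).Nonempty := by
  refine ⟨0, mem_ancS.2 ⟨Ne.symm hj, ?_⟩⟩
  have := conn_rch hconn j
  simpa using this

lemma pA_mem (hconn : (SimpleGraph.fromRel fun i j => (i, j) ∈ A).Connected)
    {j : Fin (n+1)} (hj : j ≠ 0) : pA A j ∈ ancS A j := by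
  rw [pA, dif_pos (ancS_nonempty hconn hj)]
  exact Finset.max'_mem _ _

lemma le_pA (hconn : (SimpleGraph.fromRel fun i j => (i, j) ∈ A).Connected)
    {j y : Fin (n+1)} (hj : j ≠ 0) (hy : y ∈ ancS A j) : y ≤ pA A j := by
  rw [pA, dif_pos (ancS_nonempty hconn hj)]
  exact Finset.le_max' _ _ hy

lemma pA_lt (hconn : (SimpleGraph.fromRel fun i j => (i, j) ∈ A).Connected)
    {j : Fin (n+1)} (hj : j ≠ 0) : pA A j < j :=
  ancS_lt (pA_mem hconn hj)

lemma pA_le (hconn : (SimpleGraph.fromRel fun i j => (i, j) ∈ A).Connected)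
    (x : Fin (n+1)) : pA A x ≤ x := by
  rcases eq_or_ne x 0 with rfl | hx
  · exact le_of_eq pA_zero
  · exact (pA_lt hconn hx).le

lemma reach_down {y j : Fin (n+1)} (hyj : y.val < j.val) (h : rch A y.val j y) :
    ∃ x, rch A (y.val + 1) j x ∧ ((x, y) ∈ A ∨ (y, x) ∈ A) := by
  have key : ∀ v, rch A y.val j v →
      (y.val + 1 ≤ v.val ∧ rch A (y.val + 1) j v) ∨
      (∃ x, rch A (y.val + 1) j x ∧ ((x, y) ∈ A ∨ (y, x) ∈ A)) := by
    intro v hv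
    induction hv with
    | refl => exact Or.inl ⟨by omega, rch_refl⟩
    | @tail w v' h1 h2 ih =>
        rcases ih with ⟨hw, hr⟩ | hx
        · by_cases hv' : y.val + 1 ≤ v'.val
          · exact Or.inl ⟨hv', hr.tail ⟨hw, hv', h2.2.2⟩⟩
          · have hvy : v' = y := by
              have := h2.2.1
              exact Fin.ext (by omega)
            exact Or.inr ⟨w, hr, hvy ▸ h2.2.2⟩
        · exact Or.inr hx
  rcases key y h with ⟨hy', _⟩ | hx
  · omega
  · exact hx

lemma pA_edge (hval : ∀ e ∈ A, e.2 < e.1 ∧ G.Adj e.1 e.2)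
    (hconn : (SimpleGraph.fromRel fun i j => (i, j) ∈ A).Connected)
    {i : Fin (n+1)} (hi : i ≠ 0) :
    ∃ x, i ≤ x ∧ (x, pA A i) ∈ A ∧ rch A i.val i x := by
  have hymem := pA_mem hconn hi
  have hylt : pA A i < i := ancS_lt hymem
  have hrch : rch A (pA A i).val i (pA A i) := (mem_ancS.1 hymem).2
  have hmin : ∀ w, rch A ((pA A i).val + 1) i w → i ≤ w := by
    obtain ⟨m, hm1, hm2⟩ := comp_min A ((pA A i).val + 1) i
    have hmi : m = i := by
      by_contra hne
      have hup : rch A m.val i m :=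
        rch_upgrade hm1 (fun w hw => Fin.le_def.1 (hm2 w hw))
      have hmem : m ∈ ancS A i := mem_ancS.2 ⟨hne, hup⟩
      have hmy : m ≤ pA A i := le_pA hconn hi hmem
      rcases rch_bound hm1 with h1 | h1
      · exact hne h1.symm
      · have h2 := h1.2
        have h3 := Fin.le_def.1 hmy
        omega
    intro w hw
    rw [← hmi]
    exact hm2 w hw
  obtain ⟨x, hx1, hx2⟩ := reach_down (Fin.lt_def.1 hylt) hrch
  have hxi : i ≤ x := hmin x hx1
  have hedge : (x, pA A i) ∈ A := by
    rcases hx2 with h | h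
    · exact h
    · exfalso
      have h1 := (hval _ h).1
      have h2 : pA A i < x := lt_of_lt_of_le hylt hxi
      exact absurd h1 (not_lt.2 h2.le)
  exact ⟨x, hxi, hedge, rch_upgrade hx1 (fun w hw => Fin.le_def.1 (hmin w hw))⟩

lemma Tr_pA (hG : IsThreshold n G) (hval : ∀ e ∈ A, e.2 < e.1 ∧ G.Adj e.1 e.2)
    (hconn : (SimpleGraph.fromRel fun i j => (i, j) ∈ A).Connected) :
    Tr n G (pA A) := by
  refine ⟨pA_zero, fun i hi => ⟨pA_lt hconn hi, ?_⟩⟩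
  obtain ⟨x, hxi, hedge, -⟩ := pA_edge hval hconn hi
  have hAdj : G.Adj x (pA A i) := (hval _ hedge).2
  have hlt : pA A i < x := (hval _ hedge).1
  rcases eq_or_ne x i with rfl | hne
  · exact hAdj
  · exact hG x (pA A i) i (pA A i) hlt hAdj hxi le_rfl (pA_lt hconn hi).ne'

lemma iterate_fix {q : Fin (n+1) → Fin (n+1)} (h : q 0 = 0) (k : ℕ) :
    q^[k] (0 : Fin (n+1)) = 0 := by
  induction k with
  | zero => rfl
  | succ k ih => rw [Function.iterate_succ_apply, h, ih]

lemma desc_pA_iff (hval : ∀ e ∈ A, e.2 < e.1 ∧ G.Adj e.1 e.2)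
    (hconn : (SimpleGraph.fromRel fun i j => (i, j) ∈ A).Connected)
    {i j : Fin (n+1)} : j ∈ descF (pA A) i ↔ rch A i.val i j := by
  constructor
  · intro hj
    obtain ⟨k, hk⟩ := mem_descF.1 hj
    clear hj
    induction k generalizing j with
    | zero =>
        simp only [Function.iterate_zero, id_eq] at hk
        rw [hk]
        exact rch_refl
    | succ k ih =>
        rw [Function.iterate_succ_apply] at hk
        rcases eq_or_ne j 0 with rfl | hj0
        · rw [pA_zero, iterate_fix pA_zero] at hk
          rw [← hk]
          exact rch_refl
        · have hstep : rch A (pA A j).val j (pA A j) := (mem_ancS.1 (pA_mem hconn hj0)).2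
          have hih : rch A i.val i (pA A j) := ih hk
          have hle : i ≤ pA A j := by
            rw [← hk]
            exact iter_le (pA_le hconn) k (pA A j)
          exact rch_trans hih (rch_mono (Fin.le_def.1 hle) (rch_symm hstep))
  · have key : ∀ (m : ℕ) (j : Fin (n+1)), j.val < m → rch A i.val i j →
        j ∈ descF (pA A) i := by
      intro m
      induction m with
      | zero => intro j hj; omega
      | succ m ih =>
          intro j hjm hr
          rcases eq_or_ne j i with rfl | hne
          · exact self_mem_descF
          · have hij : i < j := by
              rcases rch_bound hr with h1 | h1
              · exact absurd h1 hne.symm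
              · exact lt_of_le_of_ne (Fin.le_def.2 h1.2) hne.symm
            have hj0 : j ≠ 0 := by
              rintro rfl
              rw [Fin.lt_def] at hij
              simp at hij
            have hanc : i ∈ ancS A j := mem_ancS.2 ⟨hne.symm, rch_symm hr⟩
            have hle : i ≤ pA A j := le_pA hconn hj0 hanc
            rcases eq_or_ne (pA A j) i with hEq | hne2
            · exact mem_descF.2 ⟨1, by simpa using hEq⟩
            · have hplt : pA A j < j := pA_lt hconn hj0
              have hstep : rch A (pA A j).val j (pA A j) :=
                (mem_ancS.1 (pA_mem hconn hj0)).2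
              have hrpj : rch A i.val i (pA A j) :=
                rch_trans hr (rch_mono (Fin.le_def.1 hle) hstep)
              have hmem : pA A j ∈ descF (pA A) i :=
                ih (pA A j) (by have := Fin.lt_def.1 hplt; omega) hrpj
              exact descF_trans hmem (mem_descF.2 ⟨1, by simp⟩)
    exact fun hr => key (j.val + 1) j (by omega) hr

/-- The subset choices recovered from `A`. -/
noncomputable def gA (A : Finset (Fin (n+1) × Fin (n+1))) (i : Fin (n+1)) :
    Finset (Fin (n+1)) :=
  if i = 0 then ∅
  else Finset.univ.filter (fun x => rch A i.val i x ∧ (x, pA A i) ∈ A)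

lemma gA_mem_tFam (hval : ∀ e ∈ A, e.2 < e.1 ∧ G.Adj e.1 e.2)
    (hconn : (SimpleGraph.fromRel fun i j => (i, j) ∈ A).Connected)
    (i : Fin (n+1)) : gA A i ∈ tFam (pA A) i := by
  rcases eq_or_ne i 0 with rfl | hi
  · simp [gA, tFam]
  · rw [gA, if_neg hi, tFam, if_neg hi, Finset.mem_filter, Finset.mem_powerset]
    constructor
    · intro x hx
      rw [Finset.mem_filter] at hx
      exact (desc_pA_iff hval hconn).2 hx.2.1
    · obtain ⟨x, -, hedge, hrch⟩ := pA_edge hval hconn hi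
      exact ⟨x, Finset.mem_filter.2 ⟨Finset.mem_univ _, hrch, hedge⟩⟩

lemma Phi_Psi (hval : ∀ e ∈ A, e.2 < e.1 ∧ G.Adj e.1 e.2)
    (hconn : (SimpleGraph.fromRel fun i j => (i, j) ∈ A).Connected) :
    Phi (pA A) (gA A) = A := by
  ext e
  obtain ⟨x, y⟩ := e
  rw [mem_Phi]
  constructor
  · rintro ⟨i, hi, hx, rfl⟩
    rw [gA, if_neg hi, Finset.mem_filter] at hx
    exact hx.2.2
  · intro hxy
    have hyx : y < x := (hval _ hxy).1
    obtain ⟨m, hm1, hm2⟩ := comp_min A (y.val + 1) x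
    have hmval : y.val + 1 ≤ m.val := by
      rcases rch_bound hm1 with h1 | h1
      · rw [← h1]
        exact Fin.lt_def.1 hyx
      · exact h1.2
    have hm_ne0 : m ≠ 0 := by
      intro h0
      rw [h0] at hmval
      simp at hmval
    have hrmx : rch A m.val m x :=
      rch_symm (rch_upgrade hm1 (fun w hw => Fin.le_def.1 (hm2 w hw)))
    have hymem : y ∈ ancS A m := by
      refine mem_ancS.2 ⟨?_, ?_⟩
      · intro hEq
        rw [hEq] at hmval
        omega
      · have h1 : rch A y.val m x := rch_mono (by omega) hrmx
        exact h1.tail ⟨Fin.le_def.1 hyx.le, le_rfl, Or.inl hxy⟩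
    have hmax : ∀ z ∈ ancS A m, z ≤ y := by
      intro z hz
      by_contra hzy
      push_neg at hzy
      have hz2 := (mem_ancS.1 hz).2
      have hzlt : z < m := ancS_lt hz
      have hzb : rch A (y.val + 1) m z :=
        rch_mono (by have := Fin.lt_def.1 hzy; omega) hz2
      have hxz : rch A (y.val + 1) x z :=
        rch_trans (rch_symm (rch_mono (by omega) hrmx)) hzb
      exact absurd (hm2 z hxz) (not_le.2 hzlt)
    have hpAm : pA A m = y := by
      have hne : (ancS A m).Nonempty := ⟨y, hymem⟩
      rw [pA, dif_pos hne]
      exact le_antisymm (Finset.max'_le _ _ _ hmax) (Finset.le_max' _ _ hymem)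
    refine ⟨m, hm_ne0, ?_, hpAm.symm⟩
    rw [gA, if_neg hm_ne0, Finset.mem_filter]
    exact ⟨Finset.mem_univ _, hrmx, by rw [hpAm]; exact hxy⟩

lemma pA_Phi (hp : Tr n G p) (hg : ∀ i, g i ∈ tFam p i) : pA (Phi p g) = p := by
  funext j
  rcases eq_or_ne j 0 with rfl | hj
  · rw [pA_zero, hp.1]
  · have hpj : p j ∈ ancS (Phi p g) j := by
      refine mem_ancS.2 ⟨(hp.2 j hj).1.ne, ?_⟩
      have hd : j ∈ descF p (p j) := mem_descF.2 ⟨1, by simp⟩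
      exact rch_symm (Phi_rch_of_desc hp hg (p j) j hd)
    have hub : ∀ y ∈ ancS (Phi p g) j, y ≤ p j := by
      intro y hy
      obtain ⟨hne, hr⟩ := mem_ancS.1 hy
      have hdesc : j ∈ descF p y := Phi_desc_of_rch hp hg (rch_symm hr)
      obtain ⟨k, hk⟩ := mem_descF.1 hdesc
      have hkne : k ≠ 0 := by
        rintro rfl
        simp only [Function.iterate_zero, id_eq] at hk
        exact hne hk.symm
      obtain ⟨m, hm⟩ : ∃ m, k = m + 1 := ⟨k - 1, by omega⟩
      rw [hm, Function.iterate_succ_apply] at hk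
      calc y = p^[m] (p j) := hk.symm
        _ ≤ p j := iter_le hp.le m (p j)
    have hne : (ancS (Phi p g) j).Nonempty := ⟨p j, hpj⟩
    rw [pA, dif_pos hne]
    exact le_antisymm (Finset.max'_le _ _ _ hub) (Finset.le_max' _ _ hpj)

lemma gA_Phi (hp : Tr n G p) (hg : ∀ i, g i ∈ tFam p i) : gA (Phi p g) = g := by
  funext i
  rcases eq_or_ne i 0 with rfl | hi
  · rw [gA, if_pos rfl, g_zero (hg 0)]
  · rw [gA, if_neg hi]
    ext x
    rw [Finset.mem_filter]
    simp only [Finset.mem_univ, true_and]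
    rw [pA_Phi hp hg]
    constructor
    · rintro ⟨hr, hxA⟩
      obtain ⟨c, hc0, hxc, hpc⟩ := mem_Phi.1 hxA
      have hxdi : x ∈ descF p i := Phi_desc_of_rch hp hg hr
      have hxdc : x ∈ descF p c := g_sub hc0 (hg c) hxc
      have hci : c = i := sibling_eq hp hc0 hi hxdc hxdi hpc.symm
      rw [← hci]
      exact hxc
    · intro hx
      exact ⟨Phi_rch_of_desc hp hg i x (g_sub hi (hg i) hx),
        mem_Phi.2 ⟨i, hi, hx, rfl⟩⟩

end Psi

end ThresholdFlow


namespace ThresholdFlow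

theorem ehr_q1_eq_tutte (n : ℕ) (hn : 1 ≤ n) (G : SimpleGraph (Fin (n+1)))
    (hG : IsThreshold n G) (hc : G.Connected) :
    Ehr1 n G (fun _ => 1) =
      ∑ᶠ A ∈ {A : Finset (Fin (n+1) × Fin (n+1)) |
          (∀ e ∈ A, e.2 < e.1 ∧ G.Adj e.1 e.2) ∧
          (SimpleGraph.fromRel fun i j => (i, j) ∈ A).Connected},
        ((X : Polynomial ℤ) - 1) ^ (A.card - n) := by
  classical
  have hsetEq : {A : Finset (Fin (n+1) × Fin (n+1)) |
          (∀ e ∈ A, e.2 < e.1 ∧ G.Adj e.1 e.2) ∧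
          (SimpleGraph.fromRel fun i j => (i, j) ∈ A).Connected}
      = ↑(Finset.univ.filter (fun A : Finset (Fin (n+1) × Fin (n+1)) =>
          (∀ e ∈ A, e.2 < e.1 ∧ G.Adj e.1 e.2) ∧
          (SimpleGraph.fromRel fun i j => (i, j) ∈ A).Connected)) := by
    ext A
    simp [Finset.coe_filter]
  rw [hsetEq, finsum_mem_coe_finset, Ehr1_eq_sigma G]
  refine Finset.sum_bij' (fun x _ => Phi x.1 x.2) (fun A _ => ⟨pA A, gA A⟩)
    ?_ ?_ ?_ ?_ ?_
  · rintro ⟨p, g⟩ hx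
    rw [Finset.mem_sigma] at hx
    have hp := mem_treeF.1 hx.1
    have hg : ∀ i, g i ∈ tFam p i := Fintype.mem_piFinset.1 hx.2
    have hval := Phi_valid hG hp hg
    rw [Finset.mem_filter]
    exact ⟨Finset.mem_univ _, hval, Phi_connected hp hg hval⟩
  · intro A hA
    rw [Finset.mem_filter] at hA
    obtain ⟨-, hval, hconn⟩ := hA
    rw [Finset.mem_sigma]
    exact ⟨mem_treeF.2 (Tr_pA hG hval hconn),
      Fintype.mem_piFinset.2 (gA_mem_tFam hval hconn)⟩
  · rintro ⟨p, g⟩ hx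
    rw [Finset.mem_sigma] at hx
    have hp := mem_treeF.1 hx.1
    have hg : ∀ i, g i ∈ tFam p i := Fintype.mem_piFinset.1 hx.2
    exact Sigma.ext (pA_Phi hp hg) (heq_of_eq (gA_Phi hp hg))
  · intro A hA
    rw [Finset.mem_filter] at hA
    exact Phi_Psi hA.2.1 hA.2.2
  · rintro ⟨p, g⟩ hx
    rw [Finset.mem_sigma] at hx
    have hp := mem_treeF.1 hx.1
    have hg : ∀ i, g i ∈ tFam p i := Fintype.mem_piFinset.1 hx.2
    congr 1
    rw [sum_card_sub_one hp hg, card_Phi hp hg]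


end ThresholdFlow
end

section
/- Let G be a connected threshold graph on vertex set {0,1,…,n} (n≥1) labeled by reverse degree sequence, with edges oriented from larger to smaller endpoint. The map sending an increasing spanning tree T of G to the flow f_T that assigns the value δ_T(i) to the edge joining each vertex i∈{1,…,n} to its parent in T, and 0 to all other edges of G, is a bijection between the increasing spanning trees of G and the integer (1,1,…,1)-flows on G having exactly n positive entries. -/
open Finset Polynomial

namespace ThresholdFlow

/-- The flow associated to an increasing spanning tree: the edge joining `i ≠ 0` to its
parent `p i` carries flow `δ_T(i)`, and every other edge carries flow `0`. -/
noncomputable def treeFlow (n : ℕ) (p : Fin (n+1) → Fin (n+1)) :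
    Fin (n+1) → Fin (n+1) → ℕ :=
  fun i j => if i ≠ 0 ∧ p i = j then delta n p i else 0


section Aux

variable {n : ℕ} {p : Fin (n+1) → Fin (n+1)}

lemma desc_self (i : Fin (n+1)) : Desc n p i i := ⟨0, rfl⟩

lemma desc_trans {i j k : Fin (n+1)} (h1 : Desc n p i j) (h2 : Desc n p j k) :
    Desc n p i k := by
  obtain ⟨a, ha⟩ := h1; obtain ⟨b, hb⟩ := h2
  exact ⟨a + b, by rw [Function.iterate_add_apply, hb, ha]⟩

lemma iter_le_s4 (h0 : p 0 = 0) (hlt : ∀ i, i ≠ 0 → p i < i) (k : ℕ) (i : Fin (n+1)) :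
    p^[k] i ≤ i := by
  induction k with
  | zero => exact le_refl i
  | succ k ih =>
    rw [Function.iterate_succ_apply']
    refine le_trans ?_ ih
    by_cases h : p^[k] i = 0
    · rw [h, h0]
    · exact le_of_lt (hlt _ h)

lemma desc_le (h0 : p 0 = 0) (hlt : ∀ i, i ≠ 0 → p i < i) {i j : Fin (n+1)}
    (h : Desc n p i j) : i ≤ j := by
  obtain ⟨k, hk⟩ := h
  rw [← hk]
  exact iter_le_s4 h0 hlt k j

lemma desc_cases (i : Fin (n+1)) :
    ∀ (m : ℕ) (k : Fin (n+1)), p^[m] k = i →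
      k = i ∨ ∃ j, p j = i ∧ j ≠ i ∧ Desc n p j k := by
  intro m
  induction m with
  | zero => intro k hk; exact Or.inl hk
  | succ m ih =>
    intro k hk
    rw [Function.iterate_succ_apply'] at hk
    by_cases hji : p^[m] k = i
    · exact ih k hji
    · exact Or.inr ⟨p^[m] k, hk, hji, m, rfl⟩

open Classical in
/-- The descendants of `i` as a finset. -/
noncomputable def descFinset (n : ℕ) (p : Fin (n+1) → Fin (n+1)) (i : Fin (n+1)) :
    Finset (Fin (n+1)) := Finset.univ.filter fun j => Desc n p i j

open Classical in
/-- The children of `i` as a finset. -/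
noncomputable def childFinset (n : ℕ) (p : Fin (n+1) → Fin (n+1)) (i : Fin (n+1)) :
    Finset (Fin (n+1)) := Finset.univ.filter fun j => j ≠ 0 ∧ p j = i

lemma delta_eq_card (i : Fin (n+1)) : delta n p i = (descFinset n p i).card := by
  classical
  rw [delta, ← Set.ncard_coe_finset]
  congr 1
  ext j
  simp [descFinset]

lemma delta_pos (i : Fin (n+1)) : 0 < delta n p i := by
  rw [delta_eq_card, Finset.card_pos]
  exact ⟨i, by simp [descFinset, desc_self]⟩

lemma desc_chain (h0 : p 0 = 0) (hlt : ∀ i, i ≠ 0 → p i < i) {i j j' k : Fin (n+1)}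
    (hj : p j = i) (hj'0 : j' ≠ 0) (hj' : p j' = i)
    {a b : ℕ} (ha : p^[a] k = j) (hb : p^[b] k = j') (hab : a ≤ b) : j = j' := by
  by_contra hne
  have hb' : p^[b - a] j = j' := by
    rw [← ha, ← Function.iterate_add_apply, Nat.sub_add_cancel hab]
    exact hb
  have hba : b - a ≠ 0 := by
    intro h
    rw [h] at hb'
    exact hne (by simpa using hb')
  obtain ⟨c, hc⟩ : ∃ c, b - a = c + 1 := ⟨b - a - 1, by omega⟩
  rw [hc, Function.iterate_succ_apply, hj] at hb'
  have hle : j' ≤ i := by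
    rw [← hb']
    exact iter_le_s4 h0 hlt c i
  have : i < j' := hj' ▸ hlt j' hj'0
  exact absurd hle (not_le.mpr this)

lemma delta_rec (h0 : p 0 = 0) (hlt : ∀ i, i ≠ 0 → p i < i) (i : Fin (n+1)) :
    delta n p i = 1 + ∑ j ∈ childFinset n p i, delta n p j := by
  classical
  have hchild_gt : ∀ j ∈ childFinset n p i, i < j := by
    intro j hj
    simp only [childFinset, Finset.mem_filter] at hj
    exact hj.2.2 ▸ hlt j hj.2.1
  have hD : descFinset n p i = insert i ((childFinset n p i).biUnion (descFinset n p)) := by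
    ext k
    simp only [descFinset, childFinset, Finset.mem_insert, Finset.mem_biUnion,
      Finset.mem_filter, Finset.mem_univ, true_and]
    constructor
    · rintro ⟨m, hm⟩
      rcases desc_cases i m k hm with h | ⟨j, hpj, hji, hd⟩
      · exact Or.inl h
      · refine Or.inr ⟨j, ⟨?_, hpj⟩, hd⟩
        rintro rfl
        exact hji (by rw [← hpj, h0])
    · rintro (rfl | ⟨j, ⟨hj0, hpj⟩, hd⟩)
      · exact ⟨0, rfl⟩
      · exact desc_trans ⟨1, by simpa using hpj⟩ hd
  have hnot : i ∉ (childFinset n p i).biUnion (descFinset n p) := by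
    simp only [Finset.mem_biUnion]
    rintro ⟨j, hj, hij⟩
    have h1 : j ≤ i := desc_le h0 hlt (by simpa [descFinset] using hij)
    exact absurd h1 (not_le.mpr (hchild_gt j hj))
  have hdisj : ∀ j ∈ childFinset n p i, ∀ j' ∈ childFinset n p i, j ≠ j' →
      Disjoint (descFinset n p j) (descFinset n p j') := by
    intro j hj j' hj' hne
    rw [Finset.disjoint_left]
    intro k hk hk'
    simp only [childFinset, Finset.mem_filter, Finset.mem_univ, true_and] at hj hj'
    simp only [descFinset, Finset.mem_filter, Finset.mem_univ, true_and] at hk hk'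
    obtain ⟨a, ha⟩ := hk
    obtain ⟨b, hb⟩ := hk'
    rcases le_total a b with hab | hab
    · exact hne (desc_chain h0 hlt hj.2 hj'.1 hj'.2 ha hb hab)
    · exact hne (desc_chain h0 hlt hj'.2 hj.1 hj.2 hb ha hab).symm
  rw [delta_eq_card, hD, Finset.card_insert_of_notMem hnot, Finset.card_biUnion hdisj,
    Nat.add_comm]
  congr 1
  exact Finset.sum_congr rfl fun j _ => (delta_eq_card j).symm

lemma reach (h0 : p 0 = 0) (hlt : ∀ i, i ≠ 0 → p i < i) (i : Fin (n+1)) :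
    ∃ k, p^[k] i = 0 := by
  have H : ∀ m (i : Fin (n+1)), i.val < m → ∃ k, p^[k] i = 0 := by
    intro m
    induction m with
    | zero => intro i hi; exact absurd hi (Nat.not_lt_zero _)
    | succ m ih =>
      intro i hi
      by_cases h : i = 0
      · exact ⟨0, h⟩
      · obtain ⟨k, hk⟩ := ih (p i) (by have := hlt i h; rw [Fin.lt_def] at this; omega)
        exact ⟨k + 1, by rw [Function.iterate_succ_apply]; exact hk⟩
  exact H (n + 1) i i.isLt

lemma incr_of_lt (h0 : p 0 = 0) (hlt : ∀ i, i ≠ 0 → p i < i) : IsIncr n p := by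
  rw [IsIncr, Set.eq_empty_iff_forall_notMem]
  rintro ⟨i, j⟩ ⟨hji, hi0, hd⟩
  exact absurd (desc_le h0 hlt hd) (not_le.mpr hji)

lemma lt_of_incr {G : SimpleGraph (Fin (n+1))} (hsp : IsSpanTree n G p) (hinc : IsIncr n p)
    (i : Fin (n+1)) (hi : i ≠ 0) : p i < i := by
  rcases lt_trichotomy (p i) i with h | h | h
  · exact h
  · exfalso
    obtain ⟨k, hk⟩ := hsp.2.2 i
    rw [Function.iterate_fixed h k] at hk
    exact hi hk
  · exfalso
    have hp0 : p i ≠ 0 := by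
      intro h0
      rw [h0] at h
      exact absurd h (by simp)
    have hmem : (p i, i) ∈ invSet n p := ⟨h, hp0, 1, by simp⟩
    rw [hinc] at hmem
    exact hmem

end Aux

section Aux2

variable {n : ℕ} {p : Fin (n+1) → Fin (n+1)}

lemma sum_treeFlow_out (i : Fin (n+1)) (hi : i ≠ 0) :
    ∑ j, treeFlow n p i j = delta n p i := by
  classical
  have h : ∀ j, treeFlow n p i j = if p i = j then delta n p i else 0 := by
    intro j; simp [treeFlow, hi]
  simp only [h]
  simp [Finset.sum_ite_eq]

lemma sum_treeFlow_in (i : Fin (n+1)) :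
    ∑ j, treeFlow n p j i = ∑ j ∈ childFinset n p i, delta n p j := by
  classical
  rw [childFinset, Finset.sum_filter]
  refine Finset.sum_congr rfl fun j _ => ?_
  by_cases h : j ≠ 0 ∧ p j = i <;> simp [treeFlow, h]

lemma treeFlow_pos_iff (i j : Fin (n+1)) (hi : i ≠ 0) :
    0 < treeFlow n p i j ↔ p i = j := by
  constructor
  · intro h
    by_cases hc : i ≠ 0 ∧ p i = j
    · exact hc.2
    · simp [treeFlow, hc] at h
  · intro h
    simp only [treeFlow, if_pos (And.intro hi h)]
    exact delta_pos i

lemma treeFlow_isFlow {G : SimpleGraph (Fin (n+1))} (h0 : p 0 = 0)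
    (hlt : ∀ i, i ≠ 0 → p i < i) (hadj : ∀ i, i ≠ 0 → G.Adj i (p i)) :
    IsFlow n G (fun _ => 1) (treeFlow n p) := by
  constructor
  · intro i j hij
    by_cases h : i ≠ 0 ∧ p i = j
    · obtain ⟨hi, hpi⟩ := h
      subst hpi
      exact ⟨hlt i hi, hadj i hi⟩
    · simp [treeFlow, h] at hij
  · intro i hi
    rw [sum_treeFlow_out i hi, sum_treeFlow_in, delta_rec h0 hlt i]

lemma treeFlow_posCount (h0 : p 0 = 0) (hlt : ∀ i, i ≠ 0 → p i < i) :
    posCount n (treeFlow n p) = n := by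
  classical
  rw [posCount]
  have hset : (Finset.univ.filter fun pr : Fin (n+1) × Fin (n+1) => 0 < treeFlow n p pr.1 pr.2)
      = (Finset.univ.filter fun i : Fin (n+1) => i ≠ 0).image fun i => (i, p i) := by
    ext pr
    simp only [Finset.mem_filter, Finset.mem_univ, true_and, Finset.mem_image]
    constructor
    · intro hpr
      by_cases h : pr.1 ≠ 0 ∧ p pr.1 = pr.2
      · exact ⟨pr.1, h.1, by rw [Prod.ext_iff]; exact ⟨rfl, h.2⟩⟩
      · simp [treeFlow, h] at hpr
    · rintro ⟨i, hi, rfl⟩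
      simp only
      exact (treeFlow_pos_iff i (p i) hi).mpr rfl
  rw [hset, Finset.card_image_of_injOn (fun a _ b _ h => (Prod.ext_iff.mp h).1)]
  have h2 : (Finset.univ.filter fun i : Fin (n+1) => i ≠ 0) = Finset.univ.erase 0 := by
    ext i
    simp [Finset.mem_erase, and_comm]
  rw [h2, Finset.card_erase_of_mem (Finset.mem_univ _), Finset.card_univ, Fintype.card_fin]
  omega

set_option maxHeartbeats 1000000 in
lemma flow_surj {G : SimpleGraph (Fin (n+1))} {f : Fin (n+1) → Fin (n+1) → ℕ}
    (hflow : IsFlow n G (fun _ => 1) f) (hpos : posCount n f = n) :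
    ∃ p : Fin (n+1) → Fin (n+1),
      (IsSpanTree n G p ∧ IsIncr n p) ∧ treeFlow n p = f := by
  classical
  set R : Fin (n+1) → Finset (Fin (n+1)) :=
    fun i => Finset.univ.filter fun j => 0 < f i j with hR
  have row0 : ∀ j, f 0 j = 0 := by
    intro j
    by_contra h
    have h1 := (hflow.1 0 j h).1
    exact absurd h1 (by simp)
  have rowne : ∀ i : Fin (n+1), i ≠ 0 → (R i).Nonempty := by
    intro i hi
    have hc := hflow.2 i hi
    by_contra h
    rw [Finset.not_nonempty_iff_eq_empty] at h
    have hz : ∀ j, f i j = 0 := by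
      intro j
      by_contra hj
      have hmem : j ∈ R i := by simp [hR, Nat.pos_of_ne_zero hj]
      rw [h] at hmem
      exact absurd hmem (Finset.notMem_empty _)
    rw [Finset.sum_eq_zero (fun j _ => hz j)] at hc
    have hc' : (0:ℕ) = 1 + ∑ j, f j i := hc
    omega
  have htotal : ∑ i, (R i).card = n := by
    have h1 : posCount n f = ∑ i, (R i).card := by
      rw [posCount, Finset.card_filter, Fintype.sum_prod_type]
      exact Finset.sum_congr rfl fun i _ => (Finset.card_filter _ _).symm
    rw [← h1]
    exact hpos
  have hcard1 : ∀ i : Fin (n+1), i ≠ 0 → (R i).card = 1 := by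
    have h0card : (R 0).card = 0 := by
      rw [Finset.card_eq_zero]
      ext j
      simp [hR, row0 j]
    have hsum' : ∑ i ∈ Finset.univ.erase (0 : Fin (n+1)), (R i).card = n := by
      have hsplit : (R 0).card + ∑ i ∈ Finset.univ.erase (0 : Fin (n+1)), (R i).card
          = ∑ i, (R i).card :=
        Finset.add_sum_erase Finset.univ (fun i => (R i).card) (Finset.mem_univ (0 : Fin (n+1)))
      omega
    have hge : ∀ i ∈ Finset.univ.erase (0 : Fin (n+1)), 1 ≤ (R i).card := fun i hi =>
      Finset.card_pos.mpr (rowne i (Finset.ne_of_mem_erase hi))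
    have hcarderase : (Finset.univ.erase (0 : Fin (n+1))).card = n := by
      rw [Finset.card_erase_of_mem (Finset.mem_univ _), Finset.card_univ, Fintype.card_fin]
      omega
    have hzero : ∑ i ∈ Finset.univ.erase (0 : Fin (n+1)), ((R i).card - 1) = 0 := by
      have heq : ∑ i ∈ Finset.univ.erase (0 : Fin (n+1)), ((R i).card - 1 + 1) = n := by
        rw [Finset.sum_congr rfl fun i hi => by rw [Nat.sub_add_cancel (hge i hi)]]
        exact hsum'
      rw [Finset.sum_add_distrib, Finset.sum_const, smul_eq_mul, mul_one, hcarderase] at heq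
      omega
    intro i hi
    have ha := (Finset.sum_eq_zero_iff.mp hzero) i (Finset.mem_erase.mpr ⟨hi, Finset.mem_univ _⟩)
    have hb := hge i (Finset.mem_erase.mpr ⟨hi, Finset.mem_univ _⟩)
    omega
  set p : Fin (n+1) → Fin (n+1) :=
    fun i => if hi : i = 0 then 0 else (R i).min' (rowne i hi) with hpdef
  have hp0 : p 0 = 0 := by simp [hpdef]
  have hmem : ∀ i, i ≠ 0 → p i ∈ R i := by
    intro i hi
    simp only [hpdef, dif_neg hi]
    exact Finset.min'_mem _ _
  have hRi : ∀ i, i ≠ 0 → R i = {p i} := by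
    intro i hi
    obtain ⟨a, ha⟩ := Finset.card_eq_one.mp (hcard1 i hi)
    have hm := hmem i hi
    rw [ha] at hm ⊢
    rw [Finset.mem_singleton] at hm
    rw [hm]
  have hfpos : ∀ i j : Fin (n+1), i ≠ 0 → (0 < f i j ↔ j = p i) := by
    intro i j hi
    rw [← Finset.mem_singleton, ← hRi i hi]
    simp [hR]
  have hfpospi : ∀ i, i ≠ 0 → 0 < f i (p i) := fun i hi => (hfpos i _ hi).mpr rfl
  have hlt : ∀ i, i ≠ 0 → p i < i := fun i hi =>
    (hflow.1 i (p i) (Nat.pos_iff_ne_zero.mp (hfpospi i hi))).1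
  have hadj : ∀ i, i ≠ 0 → G.Adj i (p i) := fun i hi =>
    (hflow.1 i (p i) (Nat.pos_iff_ne_zero.mp (hfpospi i hi))).2
  have key : ∀ m, ∀ i : Fin (n+1), i ≠ 0 → n - i.val < m → f i (p i) = delta n p i := by
    intro m
    induction m with
    | zero => intro i _ h; omega
    | succ m ih =>
      intro i hi _
      have hcons := hflow.2 i hi
      have hout : ∑ j, f i j = f i (p i) := by
        apply Finset.sum_eq_single_of_mem (p i) (Finset.mem_univ _)
        intro b _ hb
        by_contra hfb
        exact hb ((hfpos i b hi).mp (Nat.pos_of_ne_zero hfb))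
      have hin : ∑ j, f j i = ∑ j ∈ childFinset n p i, delta n p j := by
        rw [childFinset, Finset.sum_filter]
        refine Finset.sum_congr rfl fun j _ => ?_
        by_cases hj : j ≠ 0 ∧ p j = i
        · rw [if_pos hj]
          have hij : i < j := hj.2 ▸ hlt j hj.1
          have hbound : n - j.val < m := by
            rw [Fin.lt_def] at hij
            have := j.isLt
            omega
          have hfj : f j i = f j (p j) := by rw [hj.2]
          rw [hfj, ih j hj.1 hbound]
        · rw [if_neg hj]
          by_contra hne
          have hj0 : j ≠ 0 := by rintro rfl; exact hne (row0 i)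
          exact hj ⟨hj0, ((hfpos j i hj0).mp (Nat.pos_of_ne_zero hne)).symm⟩
      have hval : f i (p i) = 1 + ∑ j, f j i := by
        rw [← hout]
        exact hcons
      rw [hval, hin]
      exact (delta_rec hp0 hlt i).symm
  have feq : treeFlow n p = f := by
    funext i j
    by_cases hi : i = 0
    · subst hi
      rw [row0 j]
      simp [treeFlow]
    · by_cases hj : p i = j
      · subst hj
        have ht : treeFlow n p i (p i) = delta n p i := by
          simp [treeFlow, hi]
        rw [ht]
        exact (key (n + 1) i hi (by omega)).symm
      · have hz : f i j = 0 := by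
          by_contra h
          exact hj ((hfpos i j hi).mp (Nat.pos_of_ne_zero h)).symm
        rw [hz]
        simp [treeFlow, hj]
  exact ⟨p, ⟨⟨hp0, hadj, reach hp0 hlt⟩, incr_of_lt hp0 hlt⟩, feq⟩


end Aux2

theorem treeFlow_bijOn (n : ℕ) (hn : 1 ≤ n) (G : SimpleGraph (Fin (n+1)))
    (hG : IsThreshold n G) (hc : G.Connected) :
    Set.BijOn (treeFlow n) {p | IsSpanTree n G p ∧ IsIncr n p}
      {f | IsFlow n G (fun _ => 1) f ∧ posCount n f = n} := by
  classical
  refine ⟨?_, ?_, ?_⟩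
  · rintro p ⟨hsp, hinc⟩
    have hlt := fun i hi => lt_of_incr hsp hinc i hi
    exact ⟨treeFlow_isFlow hsp.1 hlt hsp.2.1, treeFlow_posCount hsp.1 hlt⟩
  · rintro p ⟨hsp, hinc⟩ q ⟨hsq, hincq⟩ heq
    funext i
    by_cases hi : i = 0
    · rw [hi, hsp.1, hsq.1]
    · have h1 : 0 < treeFlow n p i (p i) := (treeFlow_pos_iff i (p i) hi).mpr rfl
      rw [heq] at h1
      exact ((treeFlow_pos_iff i (p i) hi).mp h1).symm
  · rintro f ⟨hflow, hpos⟩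
    obtain ⟨p, hp, hfeq⟩ := flow_surj hflow hpos
    exact ⟨p, hp, hfeq⟩

end ThresholdFlow
end

section
/- Let G be a connected threshold graph on vertex set {0,1,…,n} (n≥2) labeled by reverse degree sequence, let a=(a_1,…,a_n) be positive integers, and let m be the largest neighbor of vertex n in G. Let G' be the threshold graph obtained from G by deleting vertex n. If m>0, let G'' be the graph obtained from G by deleting the edge {n,m} and let a' = (a_1,…,a_{m−1}, a_m+a_n, a_{m+1},…,a_{n−1}); then Ehr_{q,1}(F_G(a)) = [a_n]_q · Ehr_{q,1}(F_{G'}(a')) + Ehr_{q,1}(F_{G''}(a)). If m=0, then Ehr_{q,1}(F_G(a)) = [a_n]_q · Ehr_{q,1}(F_{G'}(a_1,…,a_{n−1})). -/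
open Finset Polynomial

namespace ThresholdFlow

lemma flow_bound {n : ℕ} {G : SimpleGraph (Fin (n+1))} {a : Fin (n+1) → ℕ}
    {f : Fin (n+1) → Fin (n+1) → ℕ} (hf : IsFlow n G a f) :
    ∀ d (i : Fin (n+1)), n - i.val ≤ d → ∑ j, f i j ≤ ((∑ v, a v) + n + 2) ^ (d+1) := by
  set B := (∑ v, a v) + n + 2 with hB
  have hB1 : 1 ≤ B := by omega
  intro d
  induction d using Nat.strong_induction_on with
  | _ d IH =>
    intro i hd
    by_cases hi : i = 0
    · subst hi
      have : ∑ j, f 0 j = 0 := Finset.sum_eq_zero (fun j _ => by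
        by_contra h
        exact absurd ((hf.1 _ _ h).1) (by simp [Fin.not_lt, Fin.zero_le]))
      rw [this]; exact Nat.zero_le _
    · rw [hf.2 i hi]
      have hterm : ∀ j : Fin (n+1), f j i ≤ B ^ d := by
        intro j
        by_cases hji : f j i = 0
        · rw [hji]; exact Nat.zero_le _
        · have hlt : i < j := (hf.1 j i hji).1
          have hjn : j.val ≤ n := Nat.lt_succ_iff.mp j.isLt
          have hin : i.val < n := lt_of_lt_of_le hlt hjn
          have h1 : n - j.val < n - i.val := by omega
          have hd1 : 1 ≤ d := by omega
          have := IH (d-1) (by omega) j (by omega)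
          calc f j i ≤ ∑ j', f j j' :=
                Finset.single_le_sum (fun j' _ => Nat.zero_le _) (Finset.mem_univ i)
            _ ≤ B ^ ((d-1)+1) := this
            _ = B ^ d := by congr 1; omega
      have hsum : ∑ j, f j i ≤ (n+1) * B ^ d := by
        calc ∑ j, f j i ≤ ∑ _j : Fin (n+1), B ^ d := Finset.sum_le_sum (fun j _ => hterm j)
          _ = (n+1) * B ^ d := by simp [Finset.sum_const, mul_comm]
      have hai : a i ≤ ∑ v, a v :=
        Finset.single_le_sum (fun v _ => Nat.zero_le _) (Finset.mem_univ i)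
      have hpow : 1 ≤ B ^ d := Nat.one_le_pow _ _ (by omega)
      calc a i + ∑ j, f j i ≤ (∑ v, a v) + (n+1) * B ^ d := by omega
        _ ≤ (∑ v, a v) * B ^ d + (n+1) * B ^ d := by
            have := Nat.le_mul_of_pos_right (∑ v, a v) (show 0 < B ^ d by omega)
            omega
        _ = ((∑ v, a v) + n + 1) * B ^ d := by ring
        _ ≤ B * B ^ d := Nat.mul_le_mul_right _ (by omega)
        _ = B ^ (d+1) := by ring

lemma flows_finite (n : ℕ) (G : SimpleGraph (Fin (n+1))) (a : Fin (n+1) → ℕ) :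
    {f | IsFlow n G a f}.Finite := by
  set C := ((∑ v, a v) + n + 2) ^ (n+1) with hC
  apply Set.Finite.subset (Set.finite_Icc (fun (_ : Fin (n+1)) (_ : Fin (n+1)) => (0:ℕ))
    (fun _ _ => C))
  intro f hf
  constructor
  · intro i; intro j; exact Nat.zero_le _
  · intro i; intro j
    calc f i j ≤ ∑ j', f i j' :=
        Finset.single_le_sum (fun j' _ => Nat.zero_le _) (Finset.mem_univ j)
      _ ≤ C := flow_bound hf n i (by omega)


lemma uniq_out {n : ℕ} {G : SimpleGraph (Fin (n+1))} {a : Fin (n+1) → ℕ}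
    (ha : ∀ i : Fin (n+1), i ≠ 0 → 0 < a i)
    {f : Fin (n+1) → Fin (n+1) → ℕ} (hf : IsFlow n G a f) (hc : posCount n f = n)
    (i : Fin (n+1)) (hi : i ≠ 0) : ∃! j, f i j ≠ 0 := by
  classical
  set S := (Finset.univ.filter fun pr : Fin (n+1) × Fin (n+1) => 0 < f pr.1 pr.2) with hS
  have hcard : S.card = n := hc
  have hex : ∀ i' : Fin (n+1), i' ≠ 0 → ∃ j, f i' j ≠ 0 := by
    intro i' hi'
    have hne : ∑ j, f i' j ≠ 0 := by
      rw [hf.2 i' hi']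
      have := ha i' hi'
      omega
    obtain ⟨j, -, hj⟩ := Finset.exists_ne_zero_of_sum_ne_zero hne
    exact ⟨j, hj⟩
  have himg : S.image Prod.fst = Finset.univ.erase 0 := by
    apply Finset.Subset.antisymm
    · intro x hx
      obtain ⟨pr, hpr, rfl⟩ := Finset.mem_image.mp hx
      have hpos : 0 < f pr.1 pr.2 := (Finset.mem_filter.mp hpr).2
      have hlt : pr.2 < pr.1 := (hf.1 pr.1 pr.2 (by omega)).1
      exact Finset.mem_erase.mpr ⟨(lt_of_le_of_lt (Fin.zero_le _) hlt).ne', Finset.mem_univ _⟩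
    · intro x hx
      obtain ⟨hx0, -⟩ := Finset.mem_erase.mp hx
      obtain ⟨j, hj⟩ := hex x hx0
      exact Finset.mem_image.mpr ⟨(x, j), Finset.mem_filter.mpr ⟨Finset.mem_univ _, by simpa using Nat.pos_of_ne_zero hj⟩, rfl⟩
  have hinj : Set.InjOn Prod.fst (S : Set (Fin (n+1) × Fin (n+1))) := by
    apply Finset.card_image_iff.mp
    rw [himg, Finset.card_erase_of_mem (Finset.mem_univ _), hcard]
    simp
  obtain ⟨j0, hj0⟩ := hex i hi
  refine ⟨j0, hj0, ?_⟩
  intro j hj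
  have h1 : ((i, j) : Fin (n+1) × Fin (n+1)) ∈ S :=
    Finset.mem_filter.mpr ⟨Finset.mem_univ _, by simpa using Nat.pos_of_ne_zero hj⟩
  have h2 : ((i, j0) : Fin (n+1) × Fin (n+1)) ∈ S :=
    Finset.mem_filter.mpr ⟨Finset.mem_univ _, by simpa using Nat.pos_of_ne_zero hj0⟩
  have heq := hinj (Finset.mem_coe.mpr h1) (Finset.mem_coe.mpr h2) rfl
  exact (Prod.ext_iff.mp heq).2

lemma last_out {n : ℕ} {G : SimpleGraph (Fin (n+1))} {a : Fin (n+1) → ℕ}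
    (ha : ∀ i : Fin (n+1), i ≠ 0 → 0 < a i) (hn : (Fin.last n : Fin (n+1)) ≠ 0)
    {f : Fin (n+1) → Fin (n+1) → ℕ} (hf : IsFlow n G a f) (hc : posCount n f = n)
    {j0 : Fin (n+1)} (hj0 : f (Fin.last n) j0 ≠ 0) :
    f (Fin.last n) j0 = a (Fin.last n) ∧ ∀ j, j ≠ j0 → f (Fin.last n) j = 0 := by
  obtain ⟨j1, hj1, huniq⟩ := uniq_out ha hf hc (Fin.last n) hn
  have hj0j1 : j0 = j1 := huniq _ hj0
  subst hj0j1
  have hzero : ∀ j, j ≠ j0 → f (Fin.last n) j = 0 := by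
    intro j hj
    by_contra h
    exact hj (huniq _ h)
  refine ⟨?_, hzero⟩
  have hin : ∑ j, f j (Fin.last n) = 0 := Finset.sum_eq_zero (fun j _ => by
    by_contra h
    exact absurd ((hf.1 _ _ h).1) (by simp [Fin.not_lt, Fin.le_last]))
  have hbal := hf.2 (Fin.last n) hn
  rw [hin, add_zero] at hbal
  rw [← hbal]
  exact (Finset.sum_eq_single j0 (fun j _ hj => hzero j hj) (fun h => absurd (Finset.mem_univ _) h)).symm


/-- Extend a function on `Fin (k+2)²` to `Fin (k+3)²` by putting `c` at `(last, m)`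
and `0` elsewhere on the new row/column. -/
def ext (k : ℕ) (c : ℕ) (m : Fin (k+3)) (f' : Fin (k+2) → Fin (k+2) → ℕ) :
    Fin (k+3) → Fin (k+3) → ℕ :=
  Fin.snoc (fun i => Fin.snoc (f' i) 0) (fun j => if j = m then c else 0)

@[simp] lemma ext_castSucc_castSucc (k c : ℕ) (m : Fin (k+3)) (f' : Fin (k+2) → Fin (k+2) → ℕ)
    (i j : Fin (k+2)) : ext k c m f' i.castSucc j.castSucc = f' i j := by
  simp [ext]

@[simp] lemma ext_castSucc_last (k c : ℕ) (m : Fin (k+3)) (f' : Fin (k+2) → Fin (k+2) → ℕ)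
    (i : Fin (k+2)) : ext k c m f' i.castSucc (Fin.last (k+2)) = 0 := by
  simp [ext]

@[simp] lemma ext_last (k c : ℕ) (m : Fin (k+3)) (f' : Fin (k+2) → Fin (k+2) → ℕ)
    (j : Fin (k+3)) : ext k c m f' (Fin.last (k+2)) j = if j = m then c else 0 := by
  simp [ext]

lemma transfer_prod {M : Type*} [CommMonoid M] (F : ℕ → M) (hF : F 0 = 1)
    (k c : ℕ) (m : Fin (k+3)) (f' : Fin (k+2) → Fin (k+2) → ℕ) :
    ∏ i, ∏ j, F (ext k c m f' i j) = (∏ i, ∏ j, F (f' i j)) * F c := by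
  rw [Fin.prod_univ_castSucc (f := fun i => ∏ j, F (ext k c m f' i j))]
  have h1 : ∀ i : Fin (k+2), ∏ j : Fin (k+3), F (ext k c m f' i.castSucc j)
      = ∏ j : Fin (k+2), F (f' i j) := by
    intro i
    rw [Fin.prod_univ_castSucc (f := fun j => F (ext k c m f' i.castSucc j))]
    simp [hF]
  have h2 : ∏ j : Fin (k+3), F (ext k c m f' (Fin.last (k+2)) j) = F c := by
    have : ∀ j : Fin (k+3), F (ext k c m f' (Fin.last (k+2)) j)
        = if j = m then F c else 1 := by
      intro j; rw [ext_last]; split <;> simp [hF]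
    rw [Finset.prod_congr rfl (fun j _ => this j), Finset.prod_ite_eq' Finset.univ m (fun _ => F c),
      if_pos (Finset.mem_univ m)]
  rw [h2, Finset.prod_congr rfl (fun i _ => h1 i)]

lemma transfer_sum (F : ℕ → ℕ) (hF : F 0 = 0)
    (k c : ℕ) (m : Fin (k+3)) (f' : Fin (k+2) → Fin (k+2) → ℕ) :
    ∑ i, ∑ j, F (ext k c m f' i j) = (∑ i, ∑ j, F (f' i j)) + F c := by
  rw [Fin.sum_univ_castSucc (f := fun i => ∑ j, F (ext k c m f' i j))]
  have h1 : ∀ i : Fin (k+2), ∑ j : Fin (k+3), F (ext k c m f' i.castSucc j)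
      = ∑ j : Fin (k+2), F (f' i j) := by
    intro i
    rw [Fin.sum_univ_castSucc (f := fun j => F (ext k c m f' i.castSucc j))]
    simp [hF]
  have h2 : ∑ j : Fin (k+3), F (ext k c m f' (Fin.last (k+2)) j) = F c := by
    have : ∀ j : Fin (k+3), F (ext k c m f' (Fin.last (k+2)) j)
        = if j = m then F c else 0 := by
      intro j; rw [ext_last]; split <;> simp [hF]
    rw [Finset.sum_congr rfl (fun j _ => this j), Finset.sum_ite_eq' Finset.univ m (fun _ => F c),
      if_pos (Finset.mem_univ m)]
  rw [h2, Finset.sum_congr rfl (fun i _ => h1 i)]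

lemma posCount_eq (n : ℕ) (f : Fin (n+1) → Fin (n+1) → ℕ) :
    posCount n f = ∑ i, ∑ j, if 0 < f i j then 1 else 0 := by
  rw [posCount, Finset.card_filter, Fintype.sum_prod_type]

lemma posCount_ext (k c : ℕ) (hc : c ≠ 0) (m : Fin (k+3)) (f' : Fin (k+2) → Fin (k+2) → ℕ) :
    posCount (k+2) (ext k c m f') = posCount (k+1) f' + 1 := by
  rw [posCount_eq, posCount_eq,
    transfer_sum (fun b => if 0 < b then 1 else 0) (by simp) k c m f', if_pos (Nat.pos_of_ne_zero hc)]



section ExtMem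

variable {k : ℕ} {G : SimpleGraph (Fin (k+3))} {a : Fin (k+3) → ℕ} {m : Fin (k+3)}

lemma sum_out_ext (c : ℕ) (f' : Fin (k+2) → Fin (k+2) → ℕ) (i : Fin (k+2)) :
    ∑ j : Fin (k+3), ext k c m f' i.castSucc j = ∑ j : Fin (k+1+1), f' i j := by
  rw [Fin.sum_univ_castSucc (f := fun j => ext k c m f' i.castSucc j)]
  simp

lemma sum_in_ext (c : ℕ) (f' : Fin (k+2) → Fin (k+2) → ℕ) (i : Fin (k+2)) :
    ∑ j : Fin (k+3), ext k c m f' j i.castSucc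
      = (∑ j : Fin (k+1+1), f' j i) + (if i.castSucc = m then c else 0) := by
  rw [Fin.sum_univ_castSucc (f := fun j => ext k c m f' j i.castSucc)]
  simp

lemma ext_mem_iff (hmadj : G.Adj (Fin.last (k+2)) m)
    (a'' : Fin (k+2) → ℕ)
    (h'' : ∀ i : Fin (k+2), i ≠ 0 →
      a'' i = if i.castSucc = m then a m + a (Fin.last (k+2)) else a i.castSucc)
    (hc0 : a (Fin.last (k+2)) ≠ 0) (f' : Fin (k+2) → Fin (k+2) → ℕ) :
    (IsFlow (k+2) G a (ext k (a (Fin.last (k+2))) m f')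
        ∧ posCount (k+2) (ext k (a (Fin.last (k+2))) m f') = k+2)
      ↔ (IsFlow (k+1) (SimpleGraph.comap Fin.castSucc G) a'' f'
        ∧ posCount (k+1) f' = k+1) := by
  set c := a (Fin.last (k+2)) with hc
  have hmne : m ≠ Fin.last (k+2) := hmadj.ne'
  have hmlt : m < Fin.last (k+2) := (Fin.le_last m).lt_of_ne hmne
  have hpc : posCount (k+2) (ext k c m f') = posCount (k+1) f' + 1 := posCount_ext k c hc0 m f'
  constructor
  · rintro ⟨⟨hsupp, hbal⟩, hcount⟩
    refine ⟨⟨?_, ?_⟩, by omega⟩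
    · intro i j hij
      have := hsupp i.castSucc j.castSucc (by rwa [ext_castSucc_castSucc])
      exact ⟨Fin.castSucc_lt_castSucc_iff.mp this.1, this.2⟩
    · intro i hi
      have hbal' := hbal i.castSucc (by
        simpa [Fin.castSucc_eq_zero_iff] using hi)
      rw [sum_out_ext, sum_in_ext] at hbal'
      rw [h'' i hi]
      by_cases him : i.castSucc = m
      · rw [if_pos him] at hbal' ⊢
        have ham : a i.castSucc = a m := by rw [him]
        omega
      · rw [if_neg him] at hbal' ⊢
        omega
  · rintro ⟨⟨hsupp, hbal⟩, hcount⟩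
    refine ⟨⟨?_, ?_⟩, by omega⟩
    · intro i j hij
      induction i using Fin.lastCases with
      | last =>
        rw [ext_last] at hij
        by_cases hjm : j = m
        · subst hjm; exact ⟨hmlt, hmadj⟩
        · rw [if_neg hjm] at hij; exact absurd rfl hij
      | cast i =>
        induction j using Fin.lastCases with
        | last => rw [ext_castSucc_last] at hij; exact absurd rfl hij
        | cast j =>
          rw [ext_castSucc_castSucc] at hij
          obtain ⟨h1, h2⟩ := hsupp i j hij
          exact ⟨Fin.castSucc_lt_castSucc_iff.mpr h1, h2⟩
    · intro i hi
      induction i using Fin.lastCases with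
      | last =>
        have hout : ∑ j, ext k c m f' (Fin.last (k+2)) j = c := by
          have : ∀ j : Fin (k+3), ext k c m f' (Fin.last (k+2)) j
              = if j = m then c else 0 := fun j => ext_last k c m f' j
          rw [Finset.sum_congr rfl (fun j _ => this j),
            Finset.sum_ite_eq' Finset.univ m (fun _ => c), if_pos (Finset.mem_univ m)]
        have hin : ∑ j, ext k c m f' j (Fin.last (k+2)) = 0 := by
          rw [Fin.sum_univ_castSucc (f := fun j => ext k c m f' j (Fin.last (k+2)))]
          simp [if_neg hmne.symm, if_neg (Ne.symm hmne)]
        rw [hout, hin, add_zero, hc]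
      | cast i =>
        have hi' : i ≠ 0 := by
          intro h; subst h; simp at hi
        have hbal' := hbal i hi'
        rw [h'' i hi'] at hbal'
        rw [sum_out_ext, sum_in_ext]
        by_cases him : i.castSucc = m
        · rw [if_pos him] at hbal' ⊢
          have ham : a i.castSucc = a m := by rw [him]
          omega
        · rw [if_neg him] at hbal' ⊢
          omega

lemma eq_ext_of_mem (ha : ∀ i : Fin (k+3), i ≠ 0 → 0 < a i)
    {f : Fin (k+3) → Fin (k+3) → ℕ} (hf : IsFlow (k+2) G a f)
    (hcnt : posCount (k+2) f = k+2) (hfm : f (Fin.last (k+2)) m ≠ 0) :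
    f = ext k (a (Fin.last (k+2))) m (fun i j => f i.castSucc j.castSucc) := by
  have hlast0 : (Fin.last (k+2) : Fin (k+3)) ≠ 0 := by
    intro h
    simpa using congrArg Fin.val h
  obtain ⟨hval, hzero⟩ := last_out ha hlast0 hf hcnt hfm
  funext i j
  induction i using Fin.lastCases with
  | last =>
    rw [ext_last]
    by_cases hjm : j = m
    · subst hjm; rw [if_pos rfl, hval]
    · rw [if_neg hjm, hzero j hjm]
  | cast i =>
    induction j using Fin.lastCases with
    | last =>
      rw [ext_castSucc_last]
      by_contra h
      have := (hf.1 _ _ h).1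
      exact absurd this (by simp [Fin.not_lt, Fin.le_last])
    | cast j => rw [ext_castSucc_castSucc]

end ExtMem




lemma weight_ext (k c : ℕ) (hc0 : c ≠ 0) (m : Fin (k+3)) (f' : Fin (k+2) → Fin (k+2) → ℕ) :
    (∏ i, ∏ j, if 0 < ext k c m f' i j then qnat (ext k c m f' i j) else 1)
      = qnat c * ∏ i : Fin (k+1+1), ∏ j : Fin (k+1+1), (if 0 < f' i j then qnat (f' i j) else 1) := by
  have h := transfer_prod (fun b => if 0 < b then qnat b else 1) (by simp) k c m f'
  have h2 : (if 0 < c then qnat c else 1) = qnat c := if_pos (Nat.pos_of_ne_zero hc0)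
  calc (∏ i, ∏ j, if 0 < ext k c m f' i j then qnat (ext k c m f' i j) else 1)
      = (∏ i : Fin (k+1+1), ∏ j : Fin (k+1+1), (if 0 < f' i j then qnat (f' i j) else 1))
          * (if 0 < c then qnat c else 1) := h
    _ = qnat c * ∏ i : Fin (k+1+1), ∏ j : Fin (k+1+1), (if 0 < f' i j then qnat (f' i j) else 1) := by
        rw [h2, mul_comm]

lemma caseB (k : ℕ) (G : SimpleGraph (Fin (k+3))) (a : Fin (k+3) → ℕ)
    (ha : ∀ i : Fin (k+3), i ≠ 0 → 0 < a i) (m : Fin (k+3))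
    (hmadj : G.Adj (Fin.last (k+2)) m)
    (a'' : Fin (k+2) → ℕ)
    (h'' : ∀ i : Fin (k+2), i ≠ 0 →
      a'' i = if i.castSucc = m then a m + a (Fin.last (k+2)) else a i.castSucc)
    (hSfin : {f | IsFlow (k+2) G a f ∧ posCount (k+2) f = k+2}.Finite) :
    ∑ f ∈ hSfin.toFinset.filter (fun f => ¬ f (Fin.last (k+2)) m = 0),
        (∏ i, ∏ j, if 0 < f i j then qnat (f i j) else 1)
      = qnat (a (Fin.last (k+2))) * Ehr1 (k+1) (SimpleGraph.comap Fin.castSucc G) a'' := by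
  have hL0 : (Fin.last (k+2) : Fin (k+3)) ≠ 0 := fun h => by simpa using congrArg Fin.val h
  have hc0 : a (Fin.last (k+2)) ≠ 0 := (ha _ hL0).ne'
  have hTfin : {f' | IsFlow (k+1) (SimpleGraph.comap Fin.castSucc G) a'' f'
      ∧ posCount (k+1) f' = k+1}.Finite :=
    (flows_finite (k+1) _ a'').subset (fun x h => h.1)
  rw [Ehr1, finsum_mem_eq_finite_toFinset_sum _ hTfin, Finset.mul_sum]
  refine Finset.sum_bij' (i := fun f _ => fun i' j' => f i'.castSucc j'.castSucc)
    (j := fun f' _ => ext k (a (Fin.last (k+2))) m f') ?_ ?_ ?_ ?_ ?_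
  · intro f hf
    obtain ⟨hmem, hfm⟩ := Finset.mem_filter.mp hf
    obtain ⟨hflow, hcnt⟩ := hSfin.mem_toFinset.mp hmem
    have hfe := eq_ext_of_mem ha hflow hcnt hfm
    refine hTfin.mem_toFinset.mpr ?_
    exact (ext_mem_iff hmadj a'' h'' hc0 (fun i j => f i.castSucc j.castSucc)).mp
      (by rw [← hfe]; exact ⟨hflow, hcnt⟩)
  · intro f' hf'
    have hmem := hTfin.mem_toFinset.mp hf'
    have hS := (ext_mem_iff hmadj a'' h'' hc0 f').mpr hmem
    refine Finset.mem_filter.mpr ⟨hSfin.mem_toFinset.mpr hS, ?_⟩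
    show ¬ ext k (a (Fin.last (k+2))) m f' (Fin.last (k+2)) m = 0
    rw [ext_last, if_pos rfl]
    exact hc0
  · intro f hf
    obtain ⟨hmem, hfm⟩ := Finset.mem_filter.mp hf
    obtain ⟨hflow, hcnt⟩ := hSfin.mem_toFinset.mp hmem
    exact (eq_ext_of_mem ha hflow hcnt hfm).symm
  · intro f' _
    funext i j
    exact ext_castSucc_castSucc k _ m f' i j
  · intro f hf
    obtain ⟨hmem, hfm⟩ := Finset.mem_filter.mp hf
    obtain ⟨hflow, hcnt⟩ := hSfin.mem_toFinset.mp hmem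
    have hfe := eq_ext_of_mem ha hflow hcnt hfm
    show (∏ i, ∏ j, if 0 < f i j then qnat (f i j) else 1)
        = qnat (a (Fin.last (k+2))) * ∏ i : Fin (k+1+1), ∏ j : Fin (k+1+1),
            (if 0 < f i.castSucc j.castSucc then qnat (f i.castSucc j.castSucc) else 1)
    conv_lhs => rw [hfe]
    exact weight_ext k _ hc0 m (fun i' j' => f i'.castSucc j'.castSucc)

lemma caseA (k : ℕ) (G : SimpleGraph (Fin (k+3))) (a : Fin (k+3) → ℕ) (m : Fin (k+3))
    (hSfin : {f | IsFlow (k+2) G a f ∧ posCount (k+2) f = k+2}.Finite) :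
    ∑ f ∈ hSfin.toFinset.filter (fun f => f (Fin.last (k+2)) m = 0),
        (∏ i, ∏ j, if 0 < f i j then qnat (f i j) else 1)
      = Ehr1 (k+2) (G.deleteEdges {s(Fin.last (k+2), m)}) a := by
  have hS'fin : {f | IsFlow (k+2) (G.deleteEdges {s(Fin.last (k+2), m)}) a f
      ∧ posCount (k+2) f = k+2}.Finite :=
    (flows_finite (k+2) _ a).subset (fun x h => h.1)
  rw [Ehr1, finsum_mem_eq_finite_toFinset_sum _ hS'fin]
  refine Finset.sum_congr ?_ (fun _ _ => rfl)
  ext f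
  simp only [Finset.mem_filter, Set.Finite.mem_toFinset, Set.mem_setOf_eq]
  constructor
  · rintro ⟨⟨⟨hsupp, hbal⟩, hcnt⟩, hfm⟩
    refine ⟨⟨?_, hbal⟩, hcnt⟩
    intro i j hij
    obtain ⟨hlt, hadj⟩ := hsupp i j hij
    refine ⟨hlt, SimpleGraph.deleteEdges_adj.mpr ⟨hadj, ?_⟩⟩
    simp only [Set.mem_singleton_iff, Sym2.eq_iff]
    rintro (⟨rfl, rfl⟩ | ⟨rfl, rfl⟩)
    · exact hij hfm
    · exact absurd hlt (by simp [Fin.le_last])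
  · rintro ⟨⟨hsupp, hbal⟩, hcnt⟩
    refine ⟨⟨⟨?_, hbal⟩, hcnt⟩, ?_⟩
    · intro i j hij
      obtain ⟨hlt, hadj⟩ := hsupp i j hij
      exact ⟨hlt, (SimpleGraph.deleteEdges_adj.mp hadj).1⟩
    · by_contra h
      have hadj := (hsupp _ _ h).2
      have := (SimpleGraph.deleteEdges_adj.mp hadj).2
      exact this rfl



/-- here `n = k + 2 ≥ 2`, the graph `G` lives on `{0, …, n} = Fin (k+3)`,
`m` is the largest neighbor of the vertex `n = Fin.last (k+2)`, `G'` is the induced subgraph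
on `{0, …, n-1}` (i.e. `G` with vertex `n` deleted), and `G''` is `G` with the edge
`{n, m}` deleted. -/
theorem ehr_q1_deletion_contraction (k : ℕ) (G : SimpleGraph (Fin (k+3)))
    (hG : IsThreshold (k+2) G) (hc : G.Connected) (a : Fin (k+3) → ℕ)
    (ha : ∀ i : Fin (k+3), i ≠ 0 → 0 < a i) (m : Fin (k+3))
    (hmadj : G.Adj (Fin.last (k+2)) m) (hmmax : ∀ j, G.Adj (Fin.last (k+2)) j → j ≤ m) :
    (m ≠ 0 →
      Ehr1 (k+2) G a =
        qnat (a (Fin.last (k+2))) *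
            Ehr1 (k+1) (SimpleGraph.comap Fin.castSucc G)
              (fun i : Fin (k+2) =>
                if i.castSucc = m then a m + a (Fin.last (k+2)) else a i.castSucc) +
          Ehr1 (k+2) (G.deleteEdges {s(Fin.last (k+2), m)}) a) ∧
    (m = 0 →
      Ehr1 (k+2) G a =
        qnat (a (Fin.last (k+2))) *
          Ehr1 (k+1) (SimpleGraph.comap Fin.castSucc G)
            (fun i : Fin (k+2) => a i.castSucc)) := by
  have hL0 : (Fin.last (k+2) : Fin (k+3)) ≠ 0 := fun h => by simpa using congrArg Fin.val h
  have hSfin : {f | IsFlow (k+2) G a f ∧ posCount (k+2) f = k+2}.Finite :=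
    (flows_finite (k+2) G a).subset (fun f hf => hf.1)
  have hE : Ehr1 (k+2) G a
      = ∑ f ∈ hSfin.toFinset, (∏ i, ∏ j, if 0 < f i j then qnat (f i j) else 1) :=
    finsum_mem_eq_finite_toFinset_sum _ hSfin
  have hsplit := Finset.sum_filter_add_sum_filter_not hSfin.toFinset
    (fun f => f (Fin.last (k+2)) m = 0)
    (fun f => ∏ i, ∏ j, if 0 < f i j then qnat (f i j) else 1)
  constructor
  · intro _
    have hB := caseB k G a ha m hmadj
      (fun i : Fin (k+2) => if i.castSucc = m then a m + a (Fin.last (k+2)) else a i.castSucc)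
      (fun i _ => rfl) hSfin
    have hA := caseA k G a m hSfin
    rw [hE, ← hsplit, hA, hB]
    ring
  · intro hm0
    subst hm0
    have hempty : hSfin.toFinset.filter (fun f => f (Fin.last (k+2)) 0 = 0) = ∅ := by
      rw [Finset.filter_eq_empty_iff]
      intro f hmem
      obtain ⟨hflow, hcnt⟩ := hSfin.mem_toFinset.mp hmem
      intro hf0
      obtain ⟨j0, hj0, -⟩ := uniq_out ha hflow hcnt (Fin.last (k+2)) hL0
      have hadj := (hflow.1 _ _ hj0).2
      have hj00 : j0 = 0 := Fin.le_zero_iff.mp (hmmax j0 hadj)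
      rw [hj00] at hj0
      exact hj0 hf0
    have hB := caseB k G a ha 0 hmadj (fun i : Fin (k+2) => a i.castSucc)
      (fun i hi => by
        rw [if_neg]
        simp [Fin.castSucc_eq_zero_iff, hi]) hSfin
    rw [hE, ← hsplit, hempty, Finset.sum_empty, zero_add, hB]


end ThresholdFlow
end
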